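/- arXiv:1911.08067 — 9 statements merged into one kernel-verified Lean document; each statement's English description precedes it below -/
import Mathlib

section
/- For all d, k ∈ ℕ (d, k ≥ 1), the set Λ_d(k) determines exactly k distinct ℓ1-distances; more precisely, the set of nonzero ℓ1-distances between pairs of points of Λ_d(k) is exactly {2, 4, …, 2k}. -/
noncomputable def l1 {d : ℕ} (x : Fin d → ℝ) : ℝ := ∑ i, |x i|

def distSet {d : ℕ} (P : Set (Fin d → ℝ)) : Set ℝ :=
  {r | ∃ p ∈ P, ∃ q ∈ P, p ≠ q ∧ l1 (p - q) = r}

def Lambda (d k : ℕ) : Set (Fin d → ℝ) :=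
  {x | ∃ n : Fin d → ℤ, x = (fun i => (n i : ℝ)) ∧ (∑ i, |n i|) ≤ (k : ℤ) ∧
    (∑ i, n i) % 2 = (k : ℤ) % 2}

/-- For all d, k ≥ 1, the set of nonzero ℓ1-distances determined by Λ_d(k) is
exactly {2, 4, …, 2k}; in particular Λ_d(k) determines exactly k distinct ℓ1-distances. -/
theorem lambda_determines_exactly_k_distances (d k : ℕ) (hd : 1 ≤ d) (hk : 1 ≤ k) :
    distSet (Lambda d k) = {r : ℝ | ∃ j : ℕ, 1 ≤ j ∧ j ≤ k ∧ r = 2 * j} := by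
  have i0 : Fin d := ⟨0, hd⟩
  ext r
  constructor
  · rintro ⟨p, ⟨m, rfl, hm1, hm2⟩, q, ⟨n, rfl, hn1, hn2⟩, hne, rfl⟩
    have hmn : m ≠ n := fun h => hne (by rw [h])
    set S : ℤ := ∑ i, |m i - n i| with hS
    have hl1 : l1 ((fun i => (m i : ℝ)) - fun i => (n i : ℝ)) = (S : ℝ) := by
      simp only [l1, hS, Pi.sub_apply]
      push_cast
      rfl
    have hS0 : 0 < S := by
      rcases Function.ne_iff.mp hmn with ⟨i, hi⟩
      exact Finset.sum_pos' (fun j _ => abs_nonneg _)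
        ⟨i, Finset.mem_univ i, abs_pos.mpr (sub_ne_zero.mpr hi)⟩
    have hpar : S % 2 = 0 := by
      have e1 : S % 2 = (∑ i, (|m i - n i|) % 2) % 2 := Finset.sum_int_mod _ _ _
      have e2 : (∑ i, (|m i - n i|) % 2) = ∑ i, (m i - n i) % 2 :=
        Finset.sum_congr rfl fun i _ => by
          rcases le_or_gt (n i) (m i) with h | h
          · rw [abs_of_nonneg (by omega)]
          · rw [abs_of_neg (by omega)]; omega
      have e3 : (∑ i, (m i - n i) % 2) % 2 = (∑ i, (m i - n i)) % 2 :=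
        (Finset.sum_int_mod _ _ _).symm
      rw [e1, e2, e3, Finset.sum_sub_distrib, Int.sub_emod, hm2, hn2, sub_self, Int.zero_emod]
    have hle : S ≤ 2 * k := by
      have t1 : S ≤ ∑ i, (|m i| + |n i|) :=
        Finset.sum_le_sum fun i _ => by
          rw [sub_eq_add_neg, ← abs_neg (n i)]; exact abs_add_le _ _
      rw [Finset.sum_add_distrib] at t1
      omega
    refine ⟨(S / 2).toNat, by omega, by omega, ?_⟩
    have h2 : S = 2 * ((S / 2).toNat : ℤ) := by omega
    have h3 : (S : ℝ) = 2 * ((S / 2).toNat : ℝ) := by exact_mod_cast h2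
    rw [hl1, h3]
  · rintro ⟨j, hj1, hj2, rfl⟩
    refine ⟨(fun i => if i = i0 then (k : ℝ) else 0),
      ⟨fun i => if i = i0 then (k : ℤ) else 0, ?_, ?_, ?_⟩,
      (fun i => if i = i0 then ((k : ℝ) - 2 * j) else 0),
      ⟨fun i => if i = i0 then ((k : ℤ) - 2 * j) else 0, ?_, ?_, ?_⟩, ?_, ?_⟩
    · funext i; by_cases h : i = i0 <;> simp [h]
    · simp only [apply_ite abs, abs_zero, Finset.sum_ite_eq', Finset.mem_univ, if_true]
      rw [abs_le]; omega
    · simp only [Finset.sum_ite_eq', Finset.mem_univ, if_true]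
    · funext i; by_cases h : i = i0 <;> simp [h]
    · simp only [apply_ite abs, abs_zero, Finset.sum_ite_eq', Finset.mem_univ, if_true]
      rw [abs_le]; omega
    · simp only [Finset.sum_ite_eq', Finset.mem_univ, if_true]
      omega
    · intro h
      have h0 := congrFun h i0
      simp at h0
      have : (1 : ℝ) ≤ (j : ℕ) := by exact_mod_cast hj1
      linarith
    · have hpq : ((fun i => if i = i0 then (k : ℝ) else 0) -
          fun i => if i = i0 then ((k : ℝ) - 2 * j) else 0) =
          fun i => if i = i0 then (2 * j : ℝ) else 0 := by
        funext i; simp only [Pi.sub_apply]; split <;> ring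
      rw [hpq]
      simp only [l1, apply_ite abs, abs_zero, Finset.sum_ite_eq', Finset.mem_univ, if_true]
      rw [abs_of_nonneg (by positivity)]
end

section
/- For all d, k ∈ ℕ (d, k ≥ 1), |Λ_{d+1}(k)| = |Λ_d(k)| + 2·Σ_{j=0}^{k−1} |Λ_d(j)|. -/
/-- Integer version of `Lambda` as a `Finset`. -/
noncomputable def LF (d k : ℕ) : Finset (Fin d → ℤ) :=
  (Finset.Icc (fun _ => -(k:ℤ)) (fun _ => (k:ℤ))).filter
    (fun n => (∑ i, |n i|) ≤ (k:ℤ) ∧ (∑ i, n i) % 2 = (k:ℤ) % 2)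

lemma mem_LF {d k : ℕ} (n : Fin d → ℤ) :
    n ∈ LF d k ↔ (∑ i, |n i|) ≤ (k:ℤ) ∧ (∑ i, n i) % 2 = (k:ℤ) % 2 := by
  simp only [LF, Finset.mem_filter, Finset.mem_Icc, and_iff_right_iff_imp]
  intro h
  have key : ∀ i, -(k:ℤ) ≤ n i ∧ n i ≤ k := by
    intro i
    have h1 : |n i| ≤ (k:ℤ) :=
      le_trans (Finset.single_le_sum (f := fun j => |n j|) (fun j _ => abs_nonneg _)
        (Finset.mem_univ i)) h.1
    have := abs_le.1 h1
    omega
  exact ⟨Pi.le_def.2 fun i => (key i).1, Pi.le_def.2 fun i => (key i).2⟩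

lemma ncard_Lambda (d k : ℕ) : (Lambda d k).ncard = (LF d k).card := by
  have hinj : Function.Injective (fun (n : Fin d → ℤ) (i : Fin d) => (n i : ℝ)) := by
    intro a b hab
    funext i
    exact Int.cast_injective (congrFun hab i)
  have : Lambda d k = (fun (n : Fin d → ℤ) (i : Fin d) => (n i : ℝ)) '' ↑(LF d k) := by
    ext x
    constructor
    · rintro ⟨n, rfl, h1, h2⟩
      exact ⟨n, (mem_LF n).2 ⟨h1, h2⟩, rfl⟩
    · rintro ⟨n, hn, rfl⟩
      obtain ⟨h1, h2⟩ := (mem_LF n).1 hn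
      exact ⟨n, rfl, h1, h2⟩
  rw [this, Set.ncard_image_of_injective _ hinj, Set.ncard_coe_finset]

lemma fiber_card (d k : ℕ) (m : ℤ) (hm : m.natAbs ≤ k) :
    ((LF (d+1) k).filter (fun n => n 0 = m)).card = (LF d (k - m.natAbs)).card := by
  have hcast : ((k - m.natAbs : ℕ) : ℤ) = (k:ℤ) - |m| := by
    rw [Int.abs_eq_natAbs]; omega
  have hpar : ∀ s : ℤ, ((m + s) % 2 = (k:ℤ) % 2 ↔ s % 2 = ((k - m.natAbs : ℕ):ℤ) % 2) := by
    intro s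
    rw [hcast]
    rcases abs_choice m with h | h <;> rw [h] <;> omega
  refine Finset.card_bij' (fun n _ => Fin.tail n) (fun y _ => Fin.cons m y) ?_ ?_ ?_ ?_
  · intro n hn
    simp only [Finset.mem_filter, mem_LF] at hn
    obtain ⟨⟨h1, h2⟩, h0⟩ := hn
    rw [Fin.sum_univ_succ] at h1 h2
    rw [mem_LF]
    constructor
    · rw [hcast]; rw [h0] at h1
      have := abs_nonneg m
      simp only [Fin.tail]
      omega
    · rw [← hpar]; rw [h0] at h2; exact h2
  · intro y hy
    rw [mem_LF] at hy
    obtain ⟨h1, h2⟩ := hy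
    simp only [Finset.mem_filter, mem_LF, Fin.sum_univ_succ, Fin.cons_zero, Fin.cons_succ]
    refine ⟨⟨?_, ?_⟩, trivial⟩
    · rw [hcast] at h1; omega
    · rw [hpar]; exact h2
  · intro n hn
    simp only [Finset.mem_filter] at hn
    obtain ⟨_, h0⟩ := hn
    subst h0
    show Fin.cons (n 0) (Fin.tail n) = n
    exact Fin.cons_self_tail n
  · intro y _
    simp only [Fin.tail_cons]

lemma sum_Icc_neg (k : ℕ) (g : ℕ → ℕ) :
    ∑ m ∈ Finset.Icc (-(k:ℤ)) (k:ℤ), g m.natAbs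
    = ∑ a ∈ Finset.range (k+1), g a + ∑ a ∈ Finset.Icc 1 k, g a := by
  have hsplit : Finset.Icc (-(k:ℤ)) (k:ℤ)
      = (Finset.range (k+1)).image (fun a : ℕ => (a:ℤ))
        ∪ (Finset.Icc 1 k).image (fun a : ℕ => -(a:ℤ)) := by
    ext m
    simp only [Finset.mem_Icc, Finset.mem_union, Finset.mem_image, Finset.mem_range]
    constructor
    · intro h
      rcases le_or_gt 0 m with h0 | h0
      · exact Or.inl ⟨m.toNat, by omega, by omega⟩
      · exact Or.inr ⟨m.natAbs, by omega, by omega⟩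
    · intro h
      obtain ⟨a, ha, rfl⟩ | ⟨a, ha, rfl⟩ := h <;> constructor <;> omega
  have hdisj : Disjoint ((Finset.range (k+1)).image (fun a : ℕ => (a:ℤ)))
      ((Finset.Icc 1 k).image (fun a : ℕ => -(a:ℤ))) := by
    rw [Finset.disjoint_left]
    rintro m hm1 hm2
    simp only [Finset.mem_image, Finset.mem_range, Finset.mem_Icc] at hm1 hm2
    obtain ⟨a, _, rfl⟩ := hm1
    obtain ⟨b, hb, hba⟩ := hm2
    omega
  rw [hsplit, Finset.sum_union hdisj,
    Finset.sum_image (f := fun m : ℤ => g m.natAbs) (by intros a _ b _ h; simpa using h),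
    Finset.sum_image (f := fun m : ℤ => g m.natAbs) (by intros a _ b _ h; simpa using h)]
  simp

/-- |Λ_{d+1}(k)| = |Λ_d(k)| + 2·Σ_{j=0}^{k−1} |Λ_d(j)| for d, k ≥ 1. -/
theorem card_lambda_recursion (d k : ℕ) (hd : 1 ≤ d) (hk : 1 ≤ k) :
    (Lambda (d + 1) k).ncard =
      (Lambda d k).ncard + 2 * ∑ j ∈ Finset.range k, (Lambda d j).ncard := by
  simp only [ncard_Lambda]
  have hmem : ∀ m ∈ Finset.Icc (-(k:ℤ)) (k:ℤ),
      ((LF (d+1) k).filter (fun n => n 0 = m)).card = (LF d (k - m.natAbs)).card := by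
    intro m hm
    rw [Finset.mem_Icc] at hm
    exact fiber_card d k m (by omega)
  have h1 : ∑ a ∈ Finset.range (k+1), (LF d (k - a)).card
      = ∑ j ∈ Finset.range (k+1), (LF d j).card := by
    have := Finset.sum_range_reflect (fun j => (LF d j).card) (k+1)
    simpa using this
  have h2 : ∑ a ∈ Finset.Icc 1 k, (LF d (k - a)).card
      = ∑ j ∈ Finset.range k, (LF d j).card := by
    refine Finset.sum_nbij' (fun a => k - a) (fun j => k - j) ?_ ?_ ?_ ?_ ?_
    · intro a ha; rw [Finset.mem_Icc] at ha
      show k - a ∈ Finset.range k; rw [Finset.mem_range]; omega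
    · intro j hj; rw [Finset.mem_range] at hj
      show k - j ∈ Finset.Icc 1 k; rw [Finset.mem_Icc]; omega
    · intro a ha; rw [Finset.mem_Icc] at ha; show k - (k - a) = a; omega
    · intro j hj; rw [Finset.mem_range] at hj; show k - (k - j) = j; omega
    · intro a _; rfl
  have hfib : (LF (d+1) k).card
      = ∑ m ∈ Finset.Icc (-(k:ℤ)) (k:ℤ), ((LF (d+1) k).filter (fun n => n 0 = m)).card := by
    refine Finset.card_eq_sum_card_fiberwise fun n hn => ?_
    rw [Finset.mem_coe, mem_LF] at hn
    have h1 : |n 0| ≤ (k:ℤ) :=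
      le_trans (Finset.single_le_sum (f := fun j => |n j|) (fun j _ => abs_nonneg _)
        (Finset.mem_univ 0)) hn.1
    rw [Finset.mem_coe, Finset.mem_Icc]
    have := abs_le.1 h1
    omega
  rw [hfib, Finset.sum_congr rfl hmem, sum_Icc_neg k (fun a => (LF d (k - a)).card)]
  rw [h1, h2, Finset.sum_range_succ]
  ring
end

section
/- There exists a family of rational numbers a_{d,i}, defined for d ≥ 1 and 0 ≤ i ≤ ⌈d/2⌉ − 1 (with a_{d,i} taken to be 0 for i outside this range), such that: a_{1,0} = 1; for every d ≥ 2 and every admissible i, a_{d,i} = 2·Σ_{ℓ=0}^{i} (a_{d−1,ℓ}/(d − 2ℓ))·C(d − 2ℓ, 2(i − ℓ))·B_{2(i−ℓ)}, where B_n is the n-th Bernoulli number; for every d ≥ 1 and every integer k ≥ 0, |Λ_d(k)| = Σ_{i=0}^{⌈d/2⌉−1} a_{d,i}·(k + 1)^{d−2i}; and moreover a_{d,0} = 2^{d−1}/d! for all d ≥ 1 and a_{d,1} = 2^{d−3}/(3·(d−3)!) for all d ≥ 3. -/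
open Finset
section helpers

def cc : ℕ → ℕ → ℕ
  | 0, k => if k % 2 = 0 then 1 else 0
  | d+1, k => cc d k + 2 * ∑ m ∈ Finset.range k, cc d m

noncomputable def Zset (d k : ℕ) : Finset (Fin d → ℤ) :=
  (Fintype.piFinset fun _ => Finset.Icc (-(k:ℤ)) (k:ℤ)).filter
    fun n => ∑ i, |n i| ≤ (k:ℤ) ∧ (∑ i, n i) % 2 = (k:ℤ) % 2

lemma mem_Zset {d k : ℕ} {n : Fin d → ℤ} :
    n ∈ Zset d k ↔ (∑ i, |n i| ≤ (k:ℤ) ∧ (∑ i, n i) % 2 = (k:ℤ) % 2) := by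
  constructor
  · intro h; exact (Finset.mem_filter.mp h).2
  · intro h
    refine Finset.mem_filter.mpr ⟨Fintype.mem_piFinset.mpr fun i => ?_, h⟩
    have h1 : |n i| ≤ (k:ℤ) := le_trans (Finset.single_le_sum (f := fun j => |n j|)
      (fun j _ => abs_nonneg _) (Finset.mem_univ i)) h.1
    rw [Finset.mem_Icc]
    have := abs_le.mp h1
    omega

lemma sum_Icc_natAbs (k : ℕ) (F : ℕ → ℕ) :
    ∑ t ∈ Finset.Icc (-(k:ℤ)) (k:ℤ), F t.natAbs = F 0 + 2 * ∑ j ∈ Finset.range k, F (j+1) := by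
  induction k with
  | zero => simp
  | succ k ih =>
    have hset : Finset.Icc (-(k+1:ℕ):ℤ) ((k+1:ℕ):ℤ)
        = insert (-(k+1:ℕ):ℤ) (insert ((k+1:ℕ):ℤ) (Finset.Icc (-(k:ℕ):ℤ) (k:ℤ))) := by
      ext t; simp only [Finset.mem_Icc, Finset.mem_insert]; push_cast; omega
    rw [hset, Finset.sum_insert, Finset.sum_insert]
    · rw [ih, Finset.sum_range_succ]
      have h1 : ((-(k+1:ℕ):ℤ)).natAbs = k+1 := by
        rw [Int.natAbs_neg]; exact Int.natAbs_natCast _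
      have h2 : (((k+1:ℕ):ℤ)).natAbs = k+1 := Int.natAbs_natCast _
      rw [h1, h2]; ring
    · simp only [Finset.mem_Icc]; push_cast; omega
    · simp only [Finset.mem_insert, Finset.mem_Icc]; push_cast; omega

set_option maxHeartbeats 1000000 in
lemma card_Zset : ∀ d k : ℕ, (Zset d k).card = cc d k := by
  intro d
  induction d with
  | zero =>
    intro k
    rcases Nat.even_or_odd k with he | ho
    · have hk : k % 2 = 0 := Nat.even_iff.mp he
      have : Zset 0 k = {![]} := by
        ext n
        simp only [mem_Zset, Finset.mem_singleton]
        constructor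
        · intro _; exact funext fun i => i.elim0
        · intro h
          refine ⟨by simp, ?_⟩
          simp only [Finset.univ_eq_empty, Finset.sum_empty]
          omega
      rw [this]; simp [cc, hk]
    · have hk : k % 2 = 1 := Nat.odd_iff.mp ho
      have : Zset 0 k = ∅ := by
        ext n
        simp only [mem_Zset, Finset.notMem_empty, iff_false]
        intro h
        have h2 := h.2
        simp only [Finset.univ_eq_empty, Finset.sum_empty] at h2
        omega
      rw [this]; simp [cc, hk]
  | succ d ih =>
    intro k
    have hfiber : ∀ n ∈ Zset (d+1) k, n (Fin.last d) ∈ Finset.Icc (-(k:ℤ)) (k:ℤ) := by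
      intro n hn
      rcases mem_Zset.mp hn with ⟨h1, _⟩
      have h2 : |n (Fin.last d)| ≤ (k:ℤ) := le_trans (Finset.single_le_sum
        (f := fun j => |n j|) (fun j _ => abs_nonneg _) (Finset.mem_univ _)) h1
      rw [Finset.mem_Icc]
      have := abs_le.mp h2
      omega
    rw [Finset.card_eq_sum_card_fiberwise hfiber]
    have hfib : ∀ t ∈ Finset.Icc (-(k:ℤ)) (k:ℤ),
        ((Zset (d+1) k).filter fun n => n (Fin.last d) = t).card = cc d (k - t.natAbs) := by
      intro t ht
      rw [Finset.mem_Icc] at ht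
      have htk : t.natAbs ≤ k := by omega
      rw [← ih (k - t.natAbs)]
      refine Finset.card_bij' (fun n _ => Fin.init n) (fun m _ => Fin.snoc m t) ?_ ?_ ?_ ?_
      · intro n hn
        simp only [Finset.mem_filter] at hn
        rcases mem_Zset.mp hn.1 with ⟨h1, h2⟩
        rw [Fin.sum_univ_castSucc] at h1 h2
        rw [hn.2] at h1 h2
        have habs : |t| = (t.natAbs : ℤ) := Int.abs_eq_natAbs t
        rw [habs] at h1
        rw [mem_Zset]
        constructor
        · simp only [Fin.init]
          omega
        · simp only [Fin.init]
          omega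
      · intro m hm
        rcases mem_Zset.mp hm with ⟨h1, h2⟩
        simp only [Finset.mem_filter]
        refine ⟨mem_Zset.mpr ⟨?_, ?_⟩, by simp⟩
        · rw [Fin.sum_univ_castSucc]
          simp only [Fin.snoc_castSucc, Fin.snoc_last]
          have habs : |t| = (t.natAbs : ℤ) := Int.abs_eq_natAbs t
          rw [habs]
          omega
        · rw [Fin.sum_univ_castSucc]
          simp only [Fin.snoc_castSucc, Fin.snoc_last]
          omega
      · intro n hn
        simp only [Finset.mem_filter] at hn
        have hs := Fin.snoc_init_self n
        rw [hn.2] at hs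
        exact hs
      · intro m _
        simp
    rw [Finset.sum_congr rfl hfib, sum_Icc_natAbs k (fun s => cc d (k - s))]
    have hrefl : ∑ j ∈ Finset.range k, cc d (k - (j+1)) = ∑ m ∈ Finset.range k, cc d m := by
      rw [← Finset.sum_range_reflect]
      apply Finset.sum_congr rfl
      intro j hj
      rw [Finset.mem_range] at hj
      congr 1
      omega
    rw [hrefl]
    simp [cc]

lemma Lambda_ncard (d k : ℕ) : (Lambda d k).ncard = cc d k := by
  have him : Lambda d k = ↑((Zset d k).image fun n => (fun i => (n i : ℝ))) := by
    ext x
    simp only [Lambda, Set.mem_setOf_eq, Finset.coe_image, Set.mem_image, Finset.mem_coe,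
      mem_Zset]
    constructor
    · rintro ⟨n, rfl, h1, h2⟩; exact ⟨n, ⟨h1, h2⟩, rfl⟩
    · rintro ⟨n, ⟨h1, h2⟩, rfl⟩; exact ⟨n, rfl, h1, h2⟩
  rw [him, Set.ncard_coe_finset, Finset.card_image_of_injective, card_Zset]
  intro n m h
  funext i
  exact Int.cast_injective (congr_fun h i)

def aa : ℕ → ℕ → ℚ
  | 0, _ => 0
  | 1, i => if i = 0 then 1 else 0
  | d+2, i => if (d+3)/2 ≤ i then 0 else
      2 * ∑ ℓ ∈ Finset.range (i+1), aa (d+1) ℓ / ((d+2 : ℚ) - 2*(ℓ:ℚ)) *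
        ((d+2 - 2*ℓ).choose (2*(i-ℓ)) : ℚ) * bernoulli (2*(i-ℓ))

lemma aa_zero : ∀ d i : ℕ, (d = 0 ∨ (d+1)/2 ≤ i) → aa d i = 0 := by
  intro d i h
  match d with
  | 0 => simp [aa]
  | 1 => rcases h with h|h; · omega
         have : i ≠ 0 := by omega
         simp [aa, this]
  | d+2 => rcases h with h|h; · omega
           have : (d+3)/2 ≤ i := by omega
           simp [aa, this]

lemma aa_rec (d : ℕ) (hd : 2 ≤ d) (i : ℕ) (hi : i < (d+1)/2) :
    aa d i = 2 * ∑ ℓ ∈ Finset.range (i + 1),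
      aa (d - 1) ℓ / ((d : ℚ) - 2 * (ℓ : ℚ)) *
        (Nat.choose (d - 2 * ℓ) (2 * (i - ℓ)) : ℚ) * bernoulli (2 * (i - ℓ)) := by
  match d, hd with
  | e+2, _ =>
    have h : ¬ ((e+3)/2 ≤ i) := by omega
    rw [aa, if_neg h]
    congr 1
    apply Finset.sum_congr rfl
    intro ℓ _
    norm_num

lemma faul (p n : ℕ) (hp : 1 ≤ p) :
    ((n:ℚ)+1)^p + 2 * ∑ m ∈ Finset.range n, ((m:ℚ)+1)^p =
    ∑ r ∈ Finset.range (p/2+1),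
      2 * (bernoulli (2*r) * ((p+1).choose (2*r)) * ((n:ℚ)+1)^(p+1-2*r) / (p+1)) := by
  have hne : ((p:ℚ)+1) ≠ 0 := by positivity
  have h1 : ∑ m ∈ Finset.range (n+1), ((m:ℚ)+1)^p
      = ∑ i ∈ Finset.range (p+1),
          bernoulli' i * ((p+1).choose i) * ((n:ℚ)+1)^(p+1-i)/((p:ℚ)+1) := by
    have h := sum_Ico_pow (n+1) p
    rw [Finset.sum_Ico_eq_sum_range] at h
    simp only [Nat.add_sub_cancel] at h
    push_cast at h
    rw [← h]
    apply Finset.sum_congr rfl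
    intro m _
    ring
  have h2 : ((n:ℚ)+1)^p + 2 * ∑ m ∈ Finset.range n, ((m:ℚ)+1)^p
      = 2 * ∑ m ∈ Finset.range (n+1), ((m:ℚ)+1)^p - ((n:ℚ)+1)^p := by
    rw [Finset.sum_range_succ]; push_cast; ring
  have mem1 : (1:ℕ) ∈ Finset.range (p+1) := by
    rw [Finset.mem_range]; omega
  rw [h2, h1, ← Finset.add_sum_erase _ _ mem1]
  have hb1 : bernoulli' 1 * (((p+1).choose 1 : ℕ) : ℚ) * ((n:ℚ)+1)^(p+1-1)/((p:ℚ)+1)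
      = ((n:ℚ)+1)^p / 2 := by
    rw [bernoulli'_one, Nat.choose_one_right, Nat.add_sub_cancel]
    push_cast
    field_simp
  rw [hb1]
  have h3 : ∑ j ∈ (Finset.range (p+1)).erase 1,
      bernoulli' j * (((p+1).choose j : ℕ) : ℚ) * ((n:ℚ)+1)^(p+1-j)/((p:ℚ)+1)
      = ∑ j ∈ (Finset.range (p+1)).filter (fun j => Even j),
          bernoulli' j * (((p+1).choose j : ℕ) : ℚ) * ((n:ℚ)+1)^(p+1-j)/((p:ℚ)+1) := by
    symm
    apply Finset.sum_subset
    · intro j hj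
      rw [Finset.mem_filter] at hj
      rw [Finset.mem_erase]
      refine ⟨?_, hj.1⟩
      intro h
      subst h
      have := Nat.even_iff.mp hj.2
      omega
    · intro j hj hj2
      rw [Finset.mem_erase] at hj
      rw [Finset.mem_filter, not_and] at hj2
      have hmod : j % 2 = 1 := Nat.not_even_iff.mp (hj2 hj.2)
      rw [bernoulli'_eq_zero_of_odd (Nat.odd_iff.mpr hmod) (by omega)]
      ring
  have h4 : ∑ j ∈ (Finset.range (p+1)).filter (fun j => Even j),
      bernoulli' j * (((p+1).choose j : ℕ) : ℚ) * ((n:ℚ)+1)^(p+1-j)/((p:ℚ)+1)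
      = ∑ r ∈ Finset.range (p/2+1),
          bernoulli (2*r) * (((p+1).choose (2*r) : ℕ) : ℚ) * ((n:ℚ)+1)^(p+1-2*r)/((p:ℚ)+1) := by
    refine Finset.sum_bij' (fun j _ => j / 2) (fun r _ => 2 * r) ?_ ?_ ?_ ?_ ?_
    · intro j hj
      rw [Finset.mem_filter, Finset.mem_range] at hj
      rw [Finset.mem_range]
      rcases hj.2 with ⟨c, hc⟩
      omega
    · intro r hr
      rw [Finset.mem_range] at hr
      rw [Finset.mem_filter, Finset.mem_range]
      exact ⟨by omega, ⟨r, by ring⟩⟩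
    · intro j hj
      rw [Finset.mem_filter] at hj
      rcases hj.2 with ⟨c, hc⟩
      omega
    · intro r _
      omega
    · intro j hj
      rw [Finset.mem_filter] at hj
      rcases hj.2 with ⟨c, hc⟩
      have h2j : 2 * (j / 2) = j := by omega
      rw [h2j, bernoulli_eq_bernoulli'_of_ne_one (by omega)]
  rw [h3, h4]
  conv_rhs => rw [← Finset.mul_sum]
  ring

lemma cc1 (k : ℕ) : cc 1 k = k + 1 := by
  induction k with
  | zero => simp [cc]
  | succ k ih =>
    have h1 : cc 1 (k+1) = cc 1 k + (cc 0 (k+1) + cc 0 k) := by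
      show cc 0 (k+1) + 2 * ∑ m ∈ Finset.range (k+1), cc 0 m = _
      rw [Finset.sum_range_succ]
      show _ = (cc 0 k + 2 * ∑ m ∈ Finset.range k, cc 0 m) + _
      ring
    have h2 : cc 0 (k+1) + cc 0 k = 1 := by
      show (if (k+1) % 2 = 0 then 1 else 0) + (if k % 2 = 0 then 1 else 0) = 1
      split <;> split <;> omega
    rw [h1, h2, ih]

lemma sigma_mk_eq {a b c d : ℕ} : (⟨a,b⟩ : Σ _ : ℕ, ℕ) = ⟨c,d⟩ ↔ a = c ∧ b = d := by
  constructor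
  · intro h
    injection h with h1 h2
    exact ⟨h1, h2⟩
  · rintro ⟨rfl, rfl⟩
    rfl

lemma poly : ∀ d : ℕ, 1 ≤ d → ∀ k : ℕ,
    (cc d k : ℚ) = ∑ i ∈ Finset.range ((d+1)/2), aa d i * ((k:ℚ)+1)^(d-2*i) := by
  intro d
  induction d with
  | zero => omega
  | succ d ih =>
    intro _ k
    rcases Nat.eq_zero_or_pos d with rfl | hd
    · rw [cc1]
      simp [aa]
    have ihd := ih hd
    have hcast : (cc (d+1) k : ℚ) = (cc d k : ℚ) + 2 * ∑ m ∈ Finset.range k, (cc d m : ℚ) := by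
      rw [show cc (d+1) k = cc d k + 2 * ∑ m ∈ Finset.range k, cc d m from rfl]
      push_cast
      ring
    rw [hcast, ihd k]
    have hsum : ∑ m ∈ Finset.range k, (cc d m : ℚ)
        = ∑ ℓ ∈ Finset.range ((d+1)/2), ∑ m ∈ Finset.range k, aa d ℓ * ((m:ℚ)+1)^(d-2*ℓ) := by
      rw [← Finset.sum_comm]
      exact Finset.sum_congr rfl fun m _ => ihd m
    rw [hsum, Finset.mul_sum, ← Finset.sum_add_distrib]
    have hstep : ∀ ℓ ∈ Finset.range ((d+1)/2),
        aa d ℓ * ((k:ℚ)+1)^(d-2*ℓ) + 2 * ∑ m ∈ Finset.range k, aa d ℓ * ((m:ℚ)+1)^(d-2*ℓ)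
        = ∑ r ∈ Finset.range ((d-2*ℓ)/2+1),
            aa d ℓ * (2 * (bernoulli (2*r) * (((d-2*ℓ)+1).choose (2*r) : ℚ)
              * ((k:ℚ)+1)^((d-2*ℓ)+1-2*r) / (((d-2*ℓ : ℕ):ℚ)+1))) := by
      intro ℓ hℓ
      rw [Finset.mem_range] at hℓ
      have hp : 1 ≤ d - 2*ℓ := by omega
      have h0 : aa d ℓ * ((k:ℚ)+1)^(d-2*ℓ) + 2 * ∑ m ∈ Finset.range k, aa d ℓ * ((m:ℚ)+1)^(d-2*ℓ)
          = aa d ℓ * (((k:ℚ)+1)^(d-2*ℓ) + 2 * ∑ m ∈ Finset.range k, ((m:ℚ)+1)^(d-2*ℓ)) := by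
        rw [← Finset.mul_sum]
        ring
      rw [h0, faul (d-2*ℓ) k hp, Finset.mul_sum]
    rw [Finset.sum_congr rfl hstep]
    have hrhs : ∀ i ∈ Finset.range ((d+1+1)/2),
        aa (d+1) i * ((k:ℚ)+1)^(d+1-2*i)
        = ∑ ℓ ∈ Finset.range (i+1),
            2 * (aa d ℓ / (((d:ℚ)+1) - 2*(ℓ:ℚ)) * ((d+1-2*ℓ).choose (2*(i-ℓ)) : ℚ)
              * bernoulli (2*(i-ℓ))) * ((k:ℚ)+1)^(d+1-2*i) := by
      intro i hi
      rw [Finset.mem_range] at hi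
      rw [aa_rec (d+1) (by omega) i (by omega)]
      simp only [Nat.add_sub_cancel]
      rw [Finset.mul_sum, Finset.sum_mul]
      apply Finset.sum_congr rfl
      intro ℓ _
      push_cast
      ring
    rw [Finset.sum_congr rfl hrhs]
    have hL := Finset.sum_sigma' (Finset.range ((d+1)/2))
      (fun ℓ => Finset.range ((d-2*ℓ)/2+1))
      (fun ℓ r => aa d ℓ * (2 * (bernoulli (2*r) * ((d-2*ℓ+1).choose (2*r) : ℚ)
        * ((k:ℚ)+1)^(d-2*ℓ+1-2*r) / (((d-2*ℓ:ℕ):ℚ)+1))))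
    have hR := Finset.sum_sigma' (Finset.range ((d+1+1)/2))
      (fun i => Finset.range (i+1))
      (fun i ℓ => 2 * (aa d ℓ / (((d:ℚ)+1) - 2*(ℓ:ℚ)) * ((d+1-2*ℓ).choose (2*(i-ℓ)) : ℚ)
        * bernoulli (2*(i-ℓ))) * ((k:ℚ)+1)^(d+1-2*i))
    rw [hL, hR]
    have hval : ∀ ℓ r : ℕ, ℓ < (d+1)/2 → 2*r ≤ d - 2*ℓ →
        aa d ℓ * (2 * (bernoulli (2*r) * ((d-2*ℓ+1).choose (2*r) : ℚ)
          * ((k:ℚ)+1)^(d-2*ℓ+1-2*r) / (((d-2*ℓ:ℕ):ℚ)+1)))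
        = 2 * (aa d ℓ / (((d:ℚ)+1) - 2*(ℓ:ℚ)) * ((d+1-2*ℓ).choose (2*((ℓ+r)-ℓ)) : ℚ)
          * bernoulli (2*((ℓ+r)-ℓ))) * ((k:ℚ)+1)^(d+1-2*(ℓ+r)) := by
      intro ℓ r hℓ hr
      have e1 : d - 2*ℓ + 1 = d + 1 - 2*ℓ := by omega
      have e2 : (ℓ + r) - ℓ = r := by omega
      have e3 : d - 2*ℓ + 1 - 2*r = d + 1 - 2*(ℓ + r) := by omega
      have e4 : ((d - 2*ℓ : ℕ) : ℚ) + 1 = ((d:ℚ)+1) - 2*(ℓ:ℚ) := by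
        push_cast [Nat.cast_sub (by omega : 2*ℓ ≤ d)]
        ring
      rw [e3, e1, e2, e4]
      ring
    refine Finset.sum_bij_ne_zero (fun q _ _ => ⟨q.1 + q.2, q.1⟩) ?_ ?_ ?_ ?_
    · rintro ⟨ℓ, r⟩ h1 h2
      simp only [Finset.mem_sigma, Finset.mem_range] at h1 ⊢
      try dsimp only at h1 ⊢
      omega
    · rintro ⟨ℓ₁, r₁⟩ h11 h12 ⟨ℓ₂, r₂⟩ h21 h22 heq
      simp only [sigma_mk_eq] at heq ⊢
      omega
    · rintro ⟨i, ℓ⟩ hb hg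
      simp only [Finset.mem_sigma, Finset.mem_range] at hb
      try dsimp only at hb hg ⊢
      have hℓ : ℓ < (d+1)/2 := by
        by_contra hc
        apply hg
        rw [aa_zero d ℓ (Or.inr (by omega))]
        ring
      refine ⟨⟨ℓ, i - ℓ⟩, ?_, ?_, ?_⟩
      · simp only [Finset.mem_sigma, Finset.mem_range]
        try dsimp only
        omega
      · dsimp only
        rw [hval ℓ (i-ℓ) hℓ (by omega)]
        rw [show ℓ + (i - ℓ) = i from by omega]
        exact hg
      · show (⟨ℓ + (i - ℓ), ℓ⟩ : Σ _ : ℕ, ℕ) = ⟨i, ℓ⟩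
        exact sigma_mk_eq.mpr ⟨by omega, rfl⟩
    · rintro ⟨ℓ, r⟩ h1 h2
      simp only [Finset.mem_sigma, Finset.mem_range] at h1
      try dsimp only at h1 ⊢
      exact hval ℓ r h1.1 (by omega)

lemma bernoulli_two' : bernoulli 2 = 1/6 := by
  rw [bernoulli_eq_bernoulli'_of_ne_one (by omega), bernoulli'_two]

lemma aa_d0 : ∀ d : ℕ, 1 ≤ d → aa d 0 = 2^(d-1) / (Nat.factorial d : ℚ) := by
  intro d hd
  induction d, hd using Nat.le_induction with
  | base => simp [aa, Nat.factorial]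
  | succ n hn ih =>
    rw [aa_rec (n+1) (by omega) 0 (by omega)]
    rw [Finset.sum_range_one]
    simp only [Nat.add_sub_cancel, Nat.sub_zero, Nat.mul_zero, Nat.choose_zero_right,
      bernoulli_zero, Nat.cast_one]
    rw [ih]
    have hfac : ((n+1).factorial : ℚ) = (n+1) * (n.factorial : ℚ) := by
      rw [Nat.factorial_succ]; push_cast; ring
    have h1 : (n.factorial : ℚ) ≠ 0 := by positivity
    have h2 : ((n:ℚ)+1) ≠ 0 := by positivity
    rw [hfac]
    have hpow : (2:ℚ)^n = 2^(n-1) * 2 := by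
      conv_lhs => rw [show n = n-1+1 from by omega]
      rw [pow_succ]
    rw [hpow]
    push_cast
    field_simp
    ring

lemma aa_d1 : ∀ d : ℕ, 3 ≤ d → aa d 1 = 2^(d-3) / (3 * (Nat.factorial (d-3) : ℚ)) := by
  intro d hd
  induction d, hd using Nat.le_induction with
  | base =>
    rw [aa_rec 3 (by omega) 1 (by omega)]
    rw [Finset.sum_range_succ, Finset.sum_range_one]
    rw [aa_zero 2 1 (Or.inr (by omega))]
    have h20 : aa 2 0 = 1 := by
      rw [aa_d0 2 (by omega)]
      norm_num [Nat.factorial]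
    rw [h20]
    norm_num [bernoulli_two', Nat.factorial]
  | succ n hn ih =>
    obtain ⟨e, rfl⟩ : ∃ e, n = e + 3 := ⟨n - 3, by omega⟩
    rw [aa_rec (e+4) (by omega) 1 (by omega)]
    rw [Finset.sum_range_succ, Finset.sum_range_one]
    simp only [Nat.sub_self, Nat.mul_zero, Nat.choose_zero_right, bernoulli_zero,
      Nat.cast_one, Nat.sub_zero, Nat.mul_one]
    rw [show e+3+1-3 = e+1 from rfl, show e+3-3 = e from rfl] at *
    rw [show e+4-1 = e+3 from rfl, aa_d0 (e+3) (by omega), ih, bernoulli_two']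
    have hc2 : (((e+4).choose 2 : ℕ) : ℚ) = ((e:ℚ)+4) * ((e:ℚ)+3) / 2 := by
      rw [Nat.choose_two_right]
      have he : (e+4) * (e+4-1) = (e+4)*(e+3) := by norm_num
      rw [he]
      have h2 : 2 ∣ (e+4)*(e+3) := by
        rcases Nat.even_or_odd e with ⟨c,hc⟩|⟨c,hc⟩
        · exact Dvd.dvd.mul_right ⟨c+2, by omega⟩ _
        · exact Dvd.dvd.mul_left ⟨c+2, by omega⟩ _
      rw [Nat.cast_div h2 (by norm_num)]
      push_cast
      ring
    rw [hc2]
    rw [show e+3-1 = e+2 from rfl]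
    have hfac3 : (((e+3).factorial : ℕ) : ℚ) = ((e:ℚ)+3)*((e:ℚ)+2)*((e:ℚ)+1)*(e.factorial : ℚ) := by
      rw [Nat.factorial_succ, Nat.factorial_succ, Nat.factorial_succ]
      push_cast
      ring
    have hfac1 : (((e+1).factorial : ℕ) : ℚ) = ((e:ℚ)+1)*(e.factorial : ℚ) := by
      rw [Nat.factorial_succ]; push_cast; ring
    rw [hfac3, hfac1]
    have h0 : (e.factorial : ℚ) ≠ 0 := by positivity
    have h1 : ((e:ℚ)+1) ≠ 0 := by positivity
    have h2 : ((e:ℚ)+2) ≠ 0 := by positivity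
    have h3 : ((e:ℚ)+3) ≠ 0 := by positivity
    have h4 : ((e:ℚ)+4) ≠ 0 := by positivity
    rw [show (((e+4:ℕ)):ℚ) - 2*(((0:ℕ)):ℚ) = (e:ℚ)+4 from by push_cast; ring]
    rw [show (((e+4:ℕ)):ℚ) - 2*(1:ℚ) = (e:ℚ)+2 from by push_cast; ring]
    field_simp
    ring

end helpers

/-- Faulhaber-type formula for |Λ_d(k)|: there are rationals a_{d,i}
(for d ≥ 1, 0 ≤ i ≤ ⌈d/2⌉ − 1, zero outside this range) with a_{1,0} = 1,
satisfying the Bernoulli-number recursion, such that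
|Λ_d(k)| = Σ_i a_{d,i}(k+1)^{d−2i}, with a_{d,0} = 2^{d−1}/d! and
a_{d,1} = 2^{d−3}/(3(d−3)!). Note ⌈d/2⌉ = (d+1)/2 in ℕ. -/
theorem lambda_card_faulhaber :
    ∃ a : ℕ → ℕ → ℚ,
      (∀ d i : ℕ, (d = 0 ∨ (d + 1) / 2 ≤ i) → a d i = 0) ∧
      a 1 0 = 1 ∧
      (∀ d : ℕ, 2 ≤ d → ∀ i : ℕ, i < (d + 1) / 2 →
        a d i = 2 * ∑ ℓ ∈ Finset.range (i + 1),
          a (d - 1) ℓ / ((d : ℚ) - 2 * (ℓ : ℚ)) *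
            (Nat.choose (d - 2 * ℓ) (2 * (i - ℓ)) : ℚ) * bernoulli (2 * (i - ℓ))) ∧
      (∀ d : ℕ, 1 ≤ d → ∀ k : ℕ,
        ((Lambda d k).ncard : ℚ) =
          ∑ i ∈ Finset.range ((d + 1) / 2), a d i * ((k : ℚ) + 1) ^ (d - 2 * i)) ∧
      (∀ d : ℕ, 1 ≤ d → a d 0 = 2 ^ (d - 1) / (Nat.factorial d : ℚ)) ∧
      (∀ d : ℕ, 3 ≤ d → a d 1 = 2 ^ (d - 3) / (3 * (Nat.factorial (d - 3) : ℚ))) := by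
  refine ⟨aa, aa_zero, by simp [aa], ?_, ?_, aa_d0, aa_d1⟩
  · exact fun d hd i hi => aa_rec d hd i hi
  · intro d hd k
    rw [Lambda_ncard d k]
    exact poly d hd k
end

section
/- If k ∈ ℕ and P ⊆ ℝ² determines at most k distinct ℓ1-distances, then |P| ≤ (k + 1)². -/
def DeterminesAtMost {d : ℕ} (k : ℕ) (P : Set (Fin d → ℝ)) : Prop :=
  (distSet P).encard ≤ (k : ℕ∞)

lemma l1_pos (x : Fin 2 → ℝ) (hx : x ≠ 0) : 0 < l1 x := by
  have h : l1 x = |x 0| + |x 1| := by simp [l1, Fin.sum_univ_two]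
  have h0 : x 0 ≠ 0 ∨ x 1 ≠ 0 := by
    by_contra hc
    push_neg at hc
    apply hx
    funext i
    fin_cases i <;> simp [hc.1, hc.2]
  rcases h0 with h0 | h0
  · have := abs_pos.mpr h0
    have := abs_nonneg (x 1)
    linarith
  · have := abs_pos.mpr h0
    have := abs_nonneg (x 0)
    linarith

lemma abs_add_of_sign (σ x y : ℝ) (hσ : σ = 1 ∨ σ = -1) (hx : 0 ≤ σ * x)
    (hy : 0 ≤ σ * y) : |x + y| = |x| + |y| := by
  rcases hσ with h | h <;> subst h
  · rw [abs_of_nonneg (by linarith), abs_of_nonneg (by linarith),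
      abs_of_nonneg (by linarith)]
  · rw [abs_of_nonpos (by linarith), abs_of_nonpos (by linarith),
      abs_of_nonpos (by linarith)]
    ring

lemma l1_add_of_cone (σ : Fin 2 → ℝ) (hσ : ∀ i, σ i = 1 ∨ σ i = -1)
    (p q r : Fin 2 → ℝ) (h1 : ∀ i, 0 ≤ σ i * (q i - p i))
    (h2 : ∀ i, 0 ≤ σ i * (r i - q i)) :
    l1 (r - p) = l1 (r - q) + l1 (q - p) := by
  have e : ∀ i, |r i - p i| = |r i - q i| + |q i - p i| := by
    intro i
    have := abs_add_of_sign (σ i) (r i - q i) (q i - p i) (hσ i) (h2 i) (h1 i)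
    have e2 : r i - p i = (r i - q i) + (q i - p i) := by ring
    rw [e2, this]
  simp only [l1, Fin.sum_univ_two, Pi.sub_apply]
  rw [e 0, e 1]
  ring

noncomputable def coneSet (P : Set (Fin 2 → ℝ)) (σ : Fin 2 → ℝ) (p : Fin 2 → ℝ) : Set ℝ :=
  insert 0 {r | ∃ q ∈ P, q ≠ p ∧ (∀ i, 0 ≤ σ i * (q i - p i)) ∧ l1 (q - p) = r}

noncomputable def FF (P : Set (Fin 2 → ℝ)) (σ : Fin 2 → ℝ) (p : Fin 2 → ℝ) : ℝ :=
  sSup (coneSet P σ p)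

lemma coneSet_subset {P : Set (Fin 2 → ℝ)} {σ p : Fin 2 → ℝ} (hp : p ∈ P) :
    coneSet P σ p ⊆ insert 0 (distSet P) := by
  rintro r (rfl | ⟨q, hq, hne, -, rfl⟩)
  · exact Set.mem_insert _ _
  · exact Set.mem_insert_of_mem _ ⟨q, hq, p, hp, hne, rfl⟩

lemma coneSet_finite {P : Set (Fin 2 → ℝ)} (hfin : (distSet P).Finite)
    {σ p : Fin 2 → ℝ} (hp : p ∈ P) : (coneSet P σ p).Finite :=
  (hfin.insert 0).subset (coneSet_subset hp)

lemma FF_mem {P : Set (Fin 2 → ℝ)} (hfin : (distSet P).Finite)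
    {σ p : Fin 2 → ℝ} (hp : p ∈ P) : FF P σ p ∈ coneSet P σ p :=
  Set.Nonempty.csSup_mem ⟨0, Set.mem_insert _ _⟩ (coneSet_finite hfin hp)

lemma le_FF {P : Set (Fin 2 → ℝ)} (hfin : (distSet P).Finite)
    {σ p : Fin 2 → ℝ} (hp : p ∈ P) {r : ℝ} (hr : r ∈ coneSet P σ p) :
    r ≤ FF P σ p :=
  le_csSup (coneSet_finite hfin hp).bddAbove hr

lemma FF_lt {P : Set (Fin 2 → ℝ)} (hfin : (distSet P).Finite)
    {σ : Fin 2 → ℝ} (hσ : ∀ i, σ i = 1 ∨ σ i = -1)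
    {p q : Fin 2 → ℝ} (hp : p ∈ P) (hq : q ∈ P) (hne : q ≠ p)
    (hcone : ∀ i, 0 ≤ σ i * (q i - p i)) : FF P σ q < FF P σ p := by
  have hd : 0 < l1 (q - p) := l1_pos _ (sub_ne_zero.mpr hne)
  have hmemq : l1 (q - p) ∈ coneSet P σ p :=
    Set.mem_insert_of_mem _ ⟨q, hq, hne, hcone, rfl⟩
  rcases FF_mem hfin hq (σ := σ) with h0 | ⟨r, hr, hrne, hrcone, hre⟩
  · rw [h0]
    exact lt_of_lt_of_le hd (le_FF hfin hp hmemq)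
  · have hadd : l1 (r - p) = l1 (r - q) + l1 (q - p) :=
      l1_add_of_cone σ hσ p q r hcone hrcone
    have hrp : r ≠ p := by
      intro hrp
      subst hrp
      have h0 : l1 (r - r) = 0 := by simp [l1]
      have h1 := l1_pos (r - q) (sub_ne_zero.mpr hrne)
      linarith
    have hrconep : ∀ i, 0 ≤ σ i * (r i - p i) := by
      intro i
      have e : σ i * (r i - p i) = σ i * (r i - q i) + σ i * (q i - p i) := by ring
      have := hrcone i
      have := hcone i
      linarith
    have hmemr : l1 (r - p) ∈ coneSet P σ p :=
      Set.mem_insert_of_mem _ ⟨r, hr, hrp, hrconep, rfl⟩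
    calc FF P σ q = l1 (r - q) := hre.symm
      _ < l1 (r - q) + l1 (q - p) := by linarith
      _ = l1 (r - p) := hadd.symm
      _ ≤ FF P σ p := le_FF hfin hp hmemr

/-- If P ⊆ ℝ² determines at most k distinct ℓ1-distances, then |P| ≤ (k + 1)². -/
theorem two_dim_upper_bound (k : ℕ) (P : Set (Fin 2 → ℝ))
    (h : DeterminesAtMost k P) :
    P.encard ≤ (((k + 1) ^ 2 : ℕ) : ℕ∞) := by
  have hfin : (distSet P).Finite := Set.finite_of_encard_le_coe h
  set A : Set ℝ := insert 0 (distSet P) with hAdef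
  have hA : A.Finite := hfin.insert 0
  set σ₁ : Fin 2 → ℝ := fun _ => 1 with hσ₁def
  set σ₂ : Fin 2 → ℝ := ![1, -1] with hσ₂def
  have hσ₁ : ∀ i, σ₁ i = 1 ∨ σ₁ i = -1 := fun i => Or.inl rfl
  have hσ₂ : ∀ i, σ₂ i = 1 ∨ σ₂ i = -1 := by
    intro i
    fin_cases i
    · left; rfl
    · right; rfl
  set φ : (Fin 2 → ℝ) → ℝ × ℝ := fun p => (FF P σ₁ p, FF P σ₂ p) with hφdef
  have hmaps : Set.MapsTo φ P (A ×ˢ A) := by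
    intro p hp
    exact ⟨coneSet_subset hp (FF_mem hfin hp), coneSet_subset hp (FF_mem hfin hp)⟩
  have hinj : Set.InjOn φ P := by
    intro p hp q hq he
    by_contra hne
    have he1 : FF P σ₁ p = FF P σ₁ q := congrArg Prod.fst he
    have he2 : FF P σ₂ p = FF P σ₂ q := congrArg Prod.snd he
    rcases le_total (p 0) (q 0) with h0 | h0 <;> rcases le_total (p 1) (q 1) with h1 | h1
    · have : FF P σ₁ q < FF P σ₁ p := by
        apply FF_lt hfin hσ₁ hp hq (Ne.symm hne)
        intro i
        fin_cases i <;> simp [hσ₁def] <;> linarith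
      linarith [this, he1.le, he1.ge]
    · have : FF P σ₂ q < FF P σ₂ p := by
        apply FF_lt hfin hσ₂ hp hq (Ne.symm hne)
        intro i
        fin_cases i <;> simp [hσ₂def] <;> linarith
      linarith [this, he2.le, he2.ge]
    · have : FF P σ₂ p < FF P σ₂ q := by
        apply FF_lt hfin hσ₂ hq hp hne
        intro i
        fin_cases i <;> simp [hσ₂def] <;> linarith
      linarith [this, he2.le, he2.ge]
    · have : FF P σ₁ p < FF P σ₁ q := by
        apply FF_lt hfin hσ₁ hq hp hne
        intro i
        fin_cases i <;> simp [hσ₁def] <;> linarith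
      linarith [this, he1.le, he1.ge]
  have hcard : P.encard ≤ (A ×ˢ A).encard :=
    Set.encard_le_encard_of_injOn hmaps hinj
  have hAcard : A.encard ≤ (k + 1 : ℕ) := by
    calc A.encard ≤ (distSet P).encard + 1 := Set.encard_insert_le _ _
      _ ≤ (k : ℕ∞) + 1 := by exact add_le_add_left h 1
      _ = ((k + 1 : ℕ) : ℕ∞) := by push_cast; ring
  have hAf : A ×ˢ A = ↑(hA.toFinset ×ˢ hA.toFinset) := by
    rw [Finset.coe_product, hA.coe_toFinset]
  have hprod : (A ×ˢ A).encard = ((hA.toFinset.card * hA.toFinset.card : ℕ) : ℕ∞) := by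
    rw [hAf, Set.encard_coe_eq_coe_finsetCard, Finset.card_product]
  have hAc : hA.toFinset.card ≤ k + 1 := by
    have : (hA.toFinset.card : ℕ∞) ≤ ((k + 1 : ℕ) : ℕ∞) := by
      rw [← hA.encard_eq_coe_toFinset_card]
      exact hAcard
    exact_mod_cast this
  calc P.encard ≤ (A ×ˢ A).encard := hcard
    _ = ((hA.toFinset.card * hA.toFinset.card : ℕ) : ℕ∞) := hprod
    _ ≤ (((k + 1) ^ 2 : ℕ) : ℕ∞) := by
        have : hA.toFinset.card * hA.toFinset.card ≤ (k + 1) ^ 2 := by nlinarith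
        exact_mod_cast this
end

section
/- If k ∈ ℕ and P ⊆ ℝ² determines at most k distinct ℓ1-distances, then |P| = (k + 1)² holds if and only if P is ℓ1-similar to Λ_2(k). -/
def L1Similar {d : ℕ} (A B : Set (Fin d → ℝ)) : Prop :=
  ∃ (r : ℝ) (ε : Fin d → ℝ) (σ : Equiv.Perm (Fin d)) (t : Fin d → ℝ),
    0 < r ∧ (∀ i, ε i = 1 ∨ ε i = -1) ∧
    (fun x i => r * (ε i * x (σ i)) + t i) '' A = B

namespace TD

abbrev Pt := Fin 2 → ℝ

def U (p : Pt) : ℝ := p 0 + p 1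
def V (p : Pt) : ℝ := p 0 - p 1

lemma pt_ext {p q : Pt} (h0 : p 0 = q 0) (h1 : p 1 = q 1) : p = q := by
  funext i
  fin_cases i <;> assumption

lemma pt_ne {p q : Pt} (h : p ≠ q) : p 0 ≠ q 0 ∨ p 1 ≠ q 1 := by
  by_contra hc
  push_neg at hc
  exact h (pt_ext hc.1 hc.2)

lemma abs_add_abs (a b : ℝ) : |a| + |b| = max |a + b| |a - b| := by
  rcases abs_cases a with ⟨h1, h2⟩ | ⟨h1, h2⟩ <;>
    rcases abs_cases b with ⟨h3, h4⟩ | ⟨h3, h4⟩ <;>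
    rcases abs_cases (a + b) with ⟨h5, h6⟩ | ⟨h5, h6⟩ <;>
    rcases abs_cases (a - b) with ⟨h7, h8⟩ | ⟨h7, h8⟩ <;>
    rcases max_cases |a + b| |a - b| with ⟨h9, h10⟩ | ⟨h9, h10⟩ <;>
    linarith

lemma l1_eq (p q : Pt) : l1 (p - q) = max |U p - U q| |V p - V q| := by
  have : l1 (p - q) = |p 0 - q 0| + |p 1 - q 1| := by
    simp [l1, Fin.sum_univ_two]
  rw [this, abs_add_abs]
  congr 1 <;> [skip; skip] <;> · congr 1; simp [U, V]; ring


/-- first order: componentwise ≤, strict -/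
def LT1 (q p : Pt) : Prop := q ≠ p ∧ q 0 ≤ p 0 ∧ q 1 ≤ p 1
/-- second order -/
def LT2 (q p : Pt) : Prop := q ≠ p ∧ q 0 ≤ p 0 ∧ p 1 ≤ q 1

lemma LT1.u_lt {q p : Pt} (h : LT1 q p) : U q < U p := by
  have h0 := h.2.1; have h1 := h.2.2
  unfold U
  rcases pt_ne h.1 with h' | h'
  · have := lt_of_le_of_ne h0 h'; linarith
  · have := lt_of_le_of_ne h1 h'; linarith

lemma LT2.v_lt {q p : Pt} (h : LT2 q p) : V q < V p := by
  have h0 := h.2.1; have h1 := h.2.2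
  unfold V
  rcases pt_ne h.1 with h' | h'
  · have := lt_of_le_of_ne h0 h'; linarith
  · have := lt_of_le_of_ne h1 (Ne.symm h'); linarith

lemma LT1.dist {q p : Pt} (h : LT1 q p) : l1 (p - q) = U p - U q := by
  rw [l1_eq]
  have h1 : |U p - U q| = U p - U q := abs_of_pos (by linarith [h.u_lt])
  have h2 : |V p - V q| ≤ U p - U q := by
    rw [abs_le]; unfold U V
    constructor <;> [linarith [h.2.1, h.2.2]; linarith [h.2.1, h.2.2]]
  rw [h1]; exact max_eq_left (le_trans h2 (le_of_eq rfl))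

lemma LT2.dist {q p : Pt} (h : LT2 q p) : l1 (p - q) = V p - V q := by
  rw [l1_eq]
  have h1 : |V p - V q| = V p - V q := abs_of_pos (by linarith [h.v_lt])
  have h2 : |U p - U q| ≤ V p - V q := by
    rw [abs_le]; unfold U V
    constructor <;> [linarith [h.2.1, h.2.2]; linarith [h.2.1, h.2.2]]
  rw [h1]; exact max_eq_right h2

lemma LT1.trans {r q p : Pt} (h1 : LT1 r q) (h2 : LT1 q p) : LT1 r p := by
  refine ⟨?_, le_trans h1.2.1 h2.2.1, le_trans h1.2.2 h2.2.2⟩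
  intro hrp
  subst hrp
  exact absurd (le_antisymm h1.2.1 h2.2.1) (fun he => h1.1 (pt_ext he (le_antisymm h1.2.2 h2.2.2)))

lemma LT2.trans {r q p : Pt} (h1 : LT2 r q) (h2 : LT2 q p) : LT2 r p := by
  refine ⟨?_, le_trans h1.2.1 h2.2.1, le_trans h2.2.2 h1.2.2⟩
  intro hrp
  subst hrp
  exact absurd (le_antisymm h1.2.1 h2.2.1) (fun he => h1.1 (pt_ext he (le_antisymm h2.2.2 h1.2.2)))

lemma comparable {p q : Pt} (h : p ≠ q) : LT1 q p ∨ LT1 p q ∨ LT2 q p ∨ LT2 p q := by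
  rcases le_total (q 0) (p 0) with h0 | h0 <;> rcases le_total (q 1) (p 1) with h1 | h1
  · exact Or.inl ⟨h.symm, h0, h1⟩
  · exact Or.inr (Or.inr (Or.inl ⟨h.symm, h0, h1⟩))
  · exact Or.inr (Or.inr (Or.inr ⟨h, h0, h1⟩))
  · exact Or.inr (Or.inl ⟨h, h0, h1⟩)

variable (P : Set Pt)

/-- set of ℓ1-distances from p to points below it in LT1 -/
def S1 (p : Pt) : Set ℝ := {w | ∃ q ∈ P, LT1 q p ∧ U p - U q = w}
def S2 (p : Pt) : Set ℝ := {w | ∃ q ∈ P, LT2 q p ∧ V p - V q = w}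

lemma S1_subset_dist {p : Pt} (hp : p ∈ P) : S1 P p ⊆ distSet P := by
  rintro w ⟨q, hq, hlt, rfl⟩
  exact ⟨p, hp, q, hq, fun he => hlt.1 he.symm, hlt.dist⟩

lemma S2_subset_dist {p : Pt} (hp : p ∈ P) : S2 P p ⊆ distSet P := by
  rintro w ⟨q, hq, hlt, rfl⟩
  exact ⟨p, hp, q, hq, fun he => hlt.1 he.symm, hlt.dist⟩

noncomputable def c1 (p : Pt) : ℕ := (S1 P p).ncard
noncomputable def c2 (p : Pt) : ℕ := (S2 P p).ncard

variable {P}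

lemma S1_pos {p : Pt} {w : ℝ} (hw : w ∈ S1 P p) : 0 < w := by
  obtain ⟨q, _, hlt, rfl⟩ := hw; linarith [hlt.u_lt]

lemma S2_pos {p : Pt} {w : ℝ} (hw : w ∈ S2 P p) : 0 < w := by
  obtain ⟨q, _, hlt, rfl⟩ := hw; linarith [hlt.v_lt]

lemma c1_lt (hD : (distSet P).Finite) {q p : Pt} (hq : q ∈ P) (hp : p ∈ P)
    (h : LT1 q p) : c1 P q < c1 P p := by
  have hfin : (S1 P p).Finite := hD.subset (S1_subset_dist _ hp)
  have hsub : insert (U p - U q) ((fun w => w + (U p - U q)) '' S1 P q) ⊆ S1 P p := by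
    rintro w (rfl | ⟨w', ⟨r, hr, hlt, rfl⟩, rfl⟩)
    · exact ⟨q, hq, h, rfl⟩
    · exact ⟨r, hr, hlt.trans h, by ring⟩
  have hnot : (U p - U q) ∉ (fun w => w + (U p - U q)) '' S1 P q := by
    rintro ⟨w', hw', he⟩
    have he' : w' + (U p - U q) = U p - U q := he
    have := S1_pos hw'
    linarith
  calc c1 P q = ((fun w => w + (U p - U q)) '' S1 P q).ncard :=
        (Set.ncard_image_of_injective _ (add_left_injective _)).symm
    _ < (insert (U p - U q) ((fun w => w + (U p - U q)) '' S1 P q)).ncard := by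
        rw [Set.ncard_insert_of_notMem hnot ((hfin.subset hsub).subset (Set.subset_insert _ _))]
        omega
    _ ≤ c1 P p := Set.ncard_le_ncard hsub hfin

lemma c2_lt (hD : (distSet P).Finite) {q p : Pt} (hq : q ∈ P) (hp : p ∈ P)
    (h : LT2 q p) : c2 P q < c2 P p := by
  have hfin : (S2 P p).Finite := hD.subset (S2_subset_dist _ hp)
  have hsub : insert (V p - V q) ((fun w => w + (V p - V q)) '' S2 P q) ⊆ S2 P p := by
    rintro w (rfl | ⟨w', ⟨r, hr, hlt, rfl⟩, rfl⟩)
    · exact ⟨q, hq, h, rfl⟩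
    · exact ⟨r, hr, hlt.trans h, by ring⟩
  have hnot : (V p - V q) ∉ (fun w => w + (V p - V q)) '' S2 P q := by
    rintro ⟨w', hw', he⟩
    have he' : w' + (V p - V q) = V p - V q := he
    have := S2_pos hw'
    linarith
  calc c2 P q = ((fun w => w + (V p - V q)) '' S2 P q).ncard :=
        (Set.ncard_image_of_injective _ (add_left_injective _)).symm
    _ < (insert (V p - V q) ((fun w => w + (V p - V q)) '' S2 P q)).ncard := by
        rw [Set.ncard_insert_of_notMem hnot ((hfin.subset hsub).subset (Set.subset_insert _ _))]
        omega
    _ ≤ c2 P p := Set.ncard_le_ncard hsub hfin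

lemma c_injOn (hD : (distSet P).Finite) {p q : Pt} (hp : p ∈ P) (hq : q ∈ P)
    (h1 : c1 P p = c1 P q) (h2 : c2 P p = c2 P q) : p = q := by
  by_contra hne
  rcases comparable hne with h | h | h | h
  · exact absurd h1.symm (Nat.ne_of_lt (c1_lt hD hq hp h))
  · exact absurd h1 (Nat.ne_of_lt (c1_lt hD hp hq h))
  · exact absurd h2.symm (Nat.ne_of_lt (c2_lt hD hq hp h))
  · exact absurd h2 (Nat.ne_of_lt (c2_lt hD hp hq h))

lemma c1_le (hD : (distSet P).Finite) {p : Pt} (hp : p ∈ P) : c1 P p ≤ (distSet P).ncard :=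
  Set.ncard_le_ncard (S1_subset_dist _ hp) hD

lemma c2_le (hD : (distSet P).Finite) {p : Pt} (hp : p ∈ P) : c2 P p ≤ (distSet P).ncard :=
  Set.ncard_le_ncard (S2_subset_dist _ hp) hD


lemma counting {k : ℕ} {P : Set Pt} (h : (distSet P).encard ≤ (k : ℕ∞))
    (hcard : P.encard = (((k + 1) ^ 2 : ℕ) : ℕ∞)) :
    P.Finite ∧ (distSet P).Finite ∧ (distSet P).ncard = k ∧
      (∀ j i, j ≤ k → i ≤ k → ∃ p ∈ P, c1 P p = j ∧ c2 P p = i) := by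
  have hPfin : P.Finite := Set.finite_of_encard_eq_coe hcard
  have hDle := Set.encard_le_coe_iff_finite_ncard_le.1 h
  obtain ⟨hDfin, hDk⟩ := hDle
  set k' := (distSet P).ncard with hk'
  -- Finset versions
  have hFcard : hPfin.toFinset.card = (k + 1) ^ 2 := by
    have := hPfin.encard_eq_coe_toFinset_card
    rw [hcard] at this
    exact_mod_cast this.symm
  set c : Pt → ℕ × ℕ := fun p => (c1 P p, c2 P p) with hc
  have hinj : Set.InjOn c hPfin.toFinset := by
    intro p hp q hq he
    exact c_injOn hDfin (hPfin.mem_toFinset.1 hp) (hPfin.mem_toFinset.1 hq)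
      (congrArg Prod.fst he) (congrArg Prod.snd he)
  have himsub : Finset.image c hPfin.toFinset ⊆ Finset.Iic k' ×ˢ Finset.Iic k' := by
    intro x hx
    obtain ⟨p, hp, rfl⟩ := Finset.mem_image.1 hx
    have hp' := hPfin.mem_toFinset.1 hp
    exact Finset.mem_product.2 ⟨Finset.mem_Iic.2 (c1_le hDfin hp'),
      Finset.mem_Iic.2 (c2_le hDfin hp')⟩
  have himcard : (Finset.image c hPfin.toFinset).card = (k + 1) ^ 2 := by
    rw [Finset.card_image_of_injOn hinj, hFcard]
  -- (k+1)^2 ≤ (k'+1)^2 gives k ≤ k', so k' = k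
  have hkk' : k = k' := by
    have h1 : (k + 1) ^ 2 ≤ (k' + 1) * (k' + 1) := by
      have := Finset.card_le_card himsub
      rw [himcard] at this
      simpa [Finset.card_product, Nat.card_Iic] using this
    nlinarith [hDk]
  rw [← hkk'] at himsub
  refine ⟨hPfin, hDfin, hkk'.symm, ?_⟩
  have heq : Finset.image c hPfin.toFinset = Finset.Iic k ×ˢ Finset.Iic k := by
    apply Finset.eq_of_subset_of_card_le himsub
    rw [himcard]
    simp [Finset.card_product, Nat.card_Iic, pow_two]
  intro j i hj hi
  have : (j, i) ∈ Finset.image c hPfin.toFinset := by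
    rw [heq]
    exact Finset.mem_product.2 ⟨Finset.mem_Iic.2 hj, Finset.mem_Iic.2 hi⟩
  obtain ⟨p, hp, he⟩ := Finset.mem_image.1 this
  exact ⟨p, hPfin.mem_toFinset.1 hp, congrArg Prod.fst he, congrArg Prod.snd he⟩

lemma no_mid {m : ℕ} {δ x : ℝ} (hδ : 0 < δ) (hx : x = m * δ) (h1 : δ < x) (h2 : x < 2 * δ) :
    False := by
  have hm1 : (1 : ℝ) < m := by nlinarith
  have hm2 : (m : ℝ) < 2 := by nlinarith
  have h3 : (1 : ℕ) < m := by exact_mod_cast hm1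
  have h4 : m < 2 := by exact_mod_cast hm2
  omega

lemma ge_two {δ A B : ℝ} {m : ℕ} (hδ : 0 < δ) (hA1 : δ < A) (hA2 : A < 2 * δ)
    (hmax : max A B = m * δ) : 2 * δ ≤ B := by
  rcases max_cases A B with ⟨h1, h2⟩ | ⟨h1, h2⟩
  · exact absurd (h1 ▸ hmax) (fun hx => no_mid hδ hx hA1 hA2)
  · have hB : B = m * δ := h1 ▸ hmax
    have hm : (1 : ℝ) < m := by nlinarith
    have hm2 : (2 : ℕ) ≤ m := by
      have : (1 : ℕ) < m := by exact_mod_cast hm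
      omega
    have : (2 : ℝ) ≤ m := by exact_mod_cast hm2
    nlinarith

lemma telescope {δ : ℝ} {f : ℕ → ℝ} {k : ℕ} (h : ∀ j, j < k → f (j + 1) = f j + δ) :
    f k = f 0 + k * δ := by
  induction k with
  | zero => simp
  | succ n ih =>
    rw [h n (Nat.lt_succ_self n), ih (fun j hj => h j (Nat.lt_succ_of_lt hj))]
    push_cast
    ring

lemma core {k : ℕ} (hk : 1 ≤ k) {δ : ℝ} (hδ : 0 < δ) {a b : ℕ → ℝ}
    (ha : ∀ i, i < k → |a (i + 1) - a i| ≤ δ)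
    (hb : ∀ j, j < k → |b (j + 1) - b j| ≤ δ)
    (hpair : ∀ j i j' i', j ≤ k → i ≤ k → j' ≤ k → i' ≤ k → (j, i) ≠ (j', i') →
      ∃ m : ℕ, 1 ≤ m ∧ m ≤ k ∧
        max |a i' - a i + ((j' : ℝ) - j) * δ| |b j' - b j + ((i' : ℝ) - i) * δ| = m * δ) :
    (∀ i, i ≤ k → a i = a 0) ∧ (∀ j, j ≤ k → b j = b 0) := by
  have hmaxle : ∀ m : ℕ, m ≤ k → (m : ℝ) * δ ≤ k * δ := by
    intro m hm
    have : (m : ℝ) ≤ k := by exact_mod_cast hm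
    nlinarith
  -- corner pairs
  have hbk : b k = b 0 ∧ a k = a 0 := by
    obtain ⟨m1, hm11, hm12, hm13⟩ := hpair 0 0 k k (Nat.zero_le _) (Nat.zero_le _) le_rfl le_rfl
      (by simp only [ne_eq, Prod.mk.injEq, not_and]; omega)
    obtain ⟨m2, hm21, hm22, hm23⟩ := hpair k 0 0 k le_rfl (Nat.zero_le _) (Nat.zero_le _) le_rfl
      (by simp only [ne_eq, Prod.mk.injEq, not_and]; omega)
    push_cast at hm13 hm23
    rw [show ((k : ℝ) - 0) * δ = k * δ by ring] at hm13
    have h1 : |a k - a 0 + k * δ| ≤ k * δ := le_trans (le_max_left _ _)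
      (hm13 ▸ hmaxle m1 hm12)
    have h2 : |b k - b 0 + k * δ| ≤ k * δ := le_trans (le_max_right _ _)
      (hm13 ▸ hmaxle m1 hm12)
    rw [show ((0 : ℝ) - k) * δ = -(k * δ) by ring, show ((k : ℝ) - 0) * δ = k * δ by ring] at hm23
    have h3 : |a k - a 0 + -(k * δ)| ≤ k * δ := le_trans (le_max_left _ _)
      (hm23 ▸ hmaxle m2 hm22)
    have h4 : |b 0 - b k + k * δ| ≤ k * δ := le_trans (le_max_right _ _)
      (hm23 ▸ hmaxle m2 hm22)
    rw [abs_le] at h1 h2 h3 h4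
    constructor <;> [linarith [h2.2, h4.2]; linarith [h1.2, h3.1]]
  -- a steps vanish
  have hstepA : ∀ i, i < k → a (i + 1) = a i := by
    intro i hi
    have htle := ha i hi
    set t := a (i + 1) - a i with ht
    rw [abs_le] at htle
    rcases lt_trichotomy t 0 with htneg | htz | htpos
    · rcases eq_or_lt_of_le htle.1 with he | hlt
      · -- t = -δ : pair (k,i),(0,i+1)
        exfalso
        obtain ⟨m, hm1, hm2, hm3⟩ := hpair k i 0 (i + 1) le_rfl (le_of_lt hi)
          (Nat.zero_le _) hi (by simp only [ne_eq, Prod.mk.injEq, not_and]; omega)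
        push_cast at hm3
        rw [show a (i + 1) - a i + ((0 : ℝ) - k) * δ = t - k * δ by rw [← ht]; ring] at hm3
        have hA : |t - k * δ| = (k + 1) * δ := by
          rw [abs_of_neg (by nlinarith [htle.1])]
          rw [← he]; ring
        have hle := le_trans (le_max_left _ _) (hm3 ▸ hmaxle m hm2)
        rw [hA] at hle
        nlinarith
      · -- -δ < t < 0 : all b steps are -δ, contradiction with b k = b 0
        exfalso
        have hbstep : ∀ j, j < k → b (j + 1) = b j - δ := by
          intro j hj
          obtain ⟨m, hm1, hm2, hm3⟩ := hpair (j + 1) i j (i + 1) hj (le_of_lt hi)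
            (le_of_lt hj) hi (by simp only [ne_eq, Prod.mk.injEq, not_and]; omega)
          push_cast at hm3
          rw [show a (i + 1) - a i + ((j : ℝ) - (j + 1)) * δ = t - δ by rw [← ht]; ring] at hm3
          rw [show b j - b (j + 1) + ((i : ℝ) + 1 - i) * δ = b j - b (j + 1) + δ by ring] at hm3
          have hA : |t - δ| = δ - t := by rw [abs_of_neg (by linarith)]; ring
          rw [hA] at hm3
          have hB := ge_two hδ (by linarith) (by linarith) hm3
          have hbj := hb j hj
          rw [abs_le] at hbj
          have hx : b j - b (j + 1) + δ = 2 * δ := by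
            rcases abs_cases (b j - b (j + 1) + δ) with ⟨hc, hc2⟩ | ⟨hc, hc2⟩
            · linarith [hB, hbj.1]
            · linarith [hB, hbj.2]
          linarith
        have hT := telescope hbstep
        have hkδ : (k : ℝ) * δ > 0 := by
          have : (1 : ℝ) ≤ k := by exact_mod_cast hk
          nlinarith
        rw [hbk.1] at hT
        linarith
    · linarith [ht ▸ htz]
    · rcases eq_or_lt_of_le htle.2 with he | hlt
      · -- t = δ : pair (0,i),(k,i+1)
        exfalso
        obtain ⟨m, hm1, hm2, hm3⟩ := hpair 0 i k (i + 1) (Nat.zero_le _) (le_of_lt hi)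
          le_rfl hi (by simp only [ne_eq, Prod.mk.injEq, not_and]; omega)
        push_cast at hm3
        rw [show a (i + 1) - a i + ((k : ℝ) - 0) * δ = t + k * δ by rw [← ht]; ring] at hm3
        have hA : |t + k * δ| = (k + 1) * δ := by
          rw [abs_of_pos (by nlinarith [hmaxle 1 hk])]
          rw [he]; push_cast; ring
        have hle := le_trans (le_max_left _ _) (hm3 ▸ hmaxle m hm2)
        rw [hA] at hle
        nlinarith
      · -- 0 < t < δ : all b steps are δ
        exfalso
        have hbstep : ∀ j, j < k → b (j + 1) = b j + δ := by
          intro j hj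
          obtain ⟨m, hm1, hm2, hm3⟩ := hpair j i (j + 1) (i + 1) (le_of_lt hj) (le_of_lt hi)
            hj hi (by simp only [ne_eq, Prod.mk.injEq, not_and]; omega)
          push_cast at hm3
          rw [show a (i + 1) - a i + ((j : ℝ) + 1 - j) * δ = t + δ by rw [← ht]; ring] at hm3
          rw [show b (j + 1) - b j + ((i : ℝ) + 1 - i) * δ = b (j + 1) - b j + δ by ring] at hm3
          have hA : |t + δ| = t + δ := abs_of_pos (by linarith)
          rw [hA] at hm3
          have hB := ge_two hδ (by linarith) (by linarith) hm3
          have hbj := hb j hj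
          rw [abs_le] at hbj
          have hx : b (j + 1) - b j + δ = 2 * δ := by
            rcases abs_cases (b (j + 1) - b j + δ) with ⟨hc, hc2⟩ | ⟨hc, hc2⟩
            · linarith [hB, hbj.2]
            · linarith [hB, hbj.1]
          linarith
        have hT := telescope hbstep
        have hkδ : (k : ℝ) * δ > 0 := by
          have : (1 : ℝ) ≤ k := by exact_mod_cast hk
          nlinarith
        rw [hbk.1] at hT
        linarith
  have haconst : ∀ i, i ≤ k → a i = a 0 := by
    intro i hi
    induction i with
    | zero => rfl
    | succ n ih => rw [hstepA n (by omega)]; exact ih (by omega)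
  -- b steps vanish
  have hstepB : ∀ j, j < k → b (j + 1) = b j := by
    intro j hj
    have htle := hb j hj
    set t := b (j + 1) - b j with ht
    rw [abs_le] at htle
    rcases lt_trichotomy t 0 with htneg | htz | htpos
    · rcases eq_or_lt_of_le htle.1 with he | hlt
      · -- t = -δ : pair (j,k),(j+1,0)
        exfalso
        obtain ⟨m, hm1, hm2, hm3⟩ := hpair j k (j + 1) 0 (le_of_lt hj) le_rfl hj
          (Nat.zero_le _) (by simp only [ne_eq, Prod.mk.injEq, not_and]; omega)
        push_cast at hm3
        rw [show b (j + 1) - b j + ((0 : ℝ) - k) * δ = t - k * δ by rw [← ht]; ring] at hm3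
        have hA : |t - k * δ| = (k + 1) * δ := by
          rw [abs_of_neg (by nlinarith [htle.1])]
          rw [← he]; ring
        have hle := le_trans (le_max_right _ _) (hm3 ▸ hmaxle m hm2)
        rw [hA] at hle
        nlinarith
      · -- -δ < t < 0 : pair (j,1),(j+1,0)
        exfalso
        obtain ⟨m, hm1, hm2, hm3⟩ := hpair j 1 (j + 1) 0 (le_of_lt hj) hk hj
          (Nat.zero_le _) (by simp only [ne_eq, Prod.mk.injEq, not_and]; omega)
        push_cast at hm3
        rw [show a 0 - a 1 + ((j : ℝ) + 1 - j) * δ = a 0 - a 1 + δ by ring] at hm3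
        rw [haconst 1 hk, show a 0 - a 0 + δ = δ by ring] at hm3
        rw [show b (j + 1) - b j + ((0 : ℝ) - 1) * δ = t - δ by rw [← ht]; ring] at hm3
        have hA : |δ| = δ := abs_of_pos hδ
        have hB : |t - δ| = δ - t := by rw [abs_of_neg (by linarith)]; ring
        rw [hA, hB] at hm3
        rw [max_eq_right (by linarith)] at hm3
        exact no_mid hδ hm3 (by linarith) (by linarith)
    · linarith [ht ▸ htz]
    · rcases eq_or_lt_of_le htle.2 with he | hlt
      · -- t = δ : pair (j,0),(j+1,k)
        exfalso
        obtain ⟨m, hm1, hm2, hm3⟩ := hpair j 0 (j + 1) k (le_of_lt hj) (Nat.zero_le _) hj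
          le_rfl (by simp only [ne_eq, Prod.mk.injEq, not_and]; omega)
        push_cast at hm3
        rw [show b (j + 1) - b j + ((k : ℝ) - 0) * δ = t + k * δ by rw [← ht]; ring] at hm3
        have hA : |t + k * δ| = (k + 1) * δ := by
          rw [abs_of_pos (by nlinarith [hmaxle 1 hk])]
          rw [he]; push_cast; ring
        have hle := le_trans (le_max_right _ _) (hm3 ▸ hmaxle m hm2)
        rw [hA] at hle
        nlinarith
      · -- 0 < t < δ : pair (j,0),(j+1,1)
        exfalso
        obtain ⟨m, hm1, hm2, hm3⟩ := hpair j 0 (j + 1) 1 (le_of_lt hj) (Nat.zero_le _) hj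
          hk (by simp only [ne_eq, Prod.mk.injEq, not_and]; omega)
        push_cast at hm3
        rw [show a 1 - a 0 + ((j : ℝ) + 1 - j) * δ = a 1 - a 0 + δ by ring] at hm3
        rw [haconst 1 hk, show a 0 - a 0 + δ = δ by ring] at hm3
        rw [show b (j + 1) - b j + ((1 : ℝ) - 0) * δ = t + δ by rw [← ht]; ring] at hm3
        have hA : |δ| = δ := abs_of_pos hδ
        have hB : |t + δ| = t + δ := abs_of_pos (by linarith)
        rw [hA, hB] at hm3
        rw [max_eq_right (by linarith)] at hm3
        exact no_mid hδ hm3 (by linarith) (by linarith)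
  refine ⟨haconst, ?_⟩
  intro j hj
  induction j with
  | zero => rfl
  | succ n ih => rw [hstepB n (by omega)]; exact ih (by omega)


lemma eq_of_UV {p q : Pt} (hU : U p = U q) (hV : V p = V q) : p = q := by
  simp only [U, V] at hU hV
  exact pt_ext (by linarith) (by linarith)

lemma LT2.abs_u_le {q p : Pt} (h : LT2 q p) : |U p - U q| ≤ V p - V q := by
  have h1 := h.2.1; have h2 := h.2.2
  rw [abs_le]; unfold U V
  constructor <;> linarith

lemma LT1.abs_v_le {q p : Pt} (h : LT1 q p) : |V p - V q| ≤ U p - U q := by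
  have h1 := h.2.1; have h2 := h.2.2
  rw [abs_le]; unfold U V
  constructor <;> linarith

theorem grid_structure {k : ℕ} {P : Set Pt} (h : (distSet P).encard ≤ (k : ℕ∞))
    (hcard : P.encard = (((k + 1) ^ 2 : ℕ) : ℕ∞)) :
    ∃ δ a0 b0 : ℝ, 0 < δ ∧
      P = {p : Pt | ∃ j i : ℕ, j ≤ k ∧ i ≤ k ∧ U p = a0 + j * δ ∧ V p = b0 + i * δ} := by
  obtain ⟨hPfin, hDfin, hDk, hsurj⟩ := counting h hcard
  rcases Nat.eq_zero_or_pos k with hk0 | hk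
  · -- k = 0 : P is a singleton
    subst hk0
    have h1 : P.encard = 1 := by simpa using hcard
    obtain ⟨p0, hp0⟩ := Set.encard_eq_one.1 h1
    refine ⟨1, U p0, V p0, one_pos, ?_⟩
    rw [hp0]
    ext p
    simp only [Set.mem_singleton_iff, Set.mem_setOf_eq]
    constructor
    · rintro rfl
      exact ⟨0, 0, le_rfl, le_rfl, by simp, by simp⟩
    · rintro ⟨j, i, hj, hi, hU, hV⟩
      interval_cases j
      interval_cases i
      simp only [Nat.cast_zero, zero_mul, add_zero] at hU hV
      exact eq_of_UV hU hV
  -- k ≥ 1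
  have hsurj' : ∀ j i : ℕ, ∃ p : Pt, j ≤ k → i ≤ k → p ∈ P ∧ c1 P p = j ∧ c2 P p = i := by
    intro j i
    by_cases hji : j ≤ k ∧ i ≤ k
    · obtain ⟨p, hp, h1, h2⟩ := hsurj j i hji.1 hji.2
      exact ⟨p, fun _ _ => ⟨hp, h1, h2⟩⟩
    · exact ⟨fun _ => 0, fun hj hi => absurd ⟨hj, hi⟩ hji⟩
  choose q hq using hsurj'
  have hqP : ∀ {j i}, j ≤ k → i ≤ k → q j i ∈ P := fun hj hi => (hq _ _ hj hi).1
  have hqc1 : ∀ {j i}, j ≤ k → i ≤ k → c1 P (q j i) = j := fun hj hi => (hq _ _ hj hi).2.1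
  have hqc2 : ∀ {j i}, j ≤ k → i ≤ k → c2 P (q j i) = i := fun hj hi => (hq _ _ hj hi).2.2
  have hne : ∀ {j i j' i'}, j ≤ k → i ≤ k → j' ≤ k → i' ≤ k → (j, i) ≠ (j', i') →
      q j i ≠ q j' i' := by
    intro j i j' i' hj hi hj' hi' hne he
    apply hne
    have e1 : j = j' := by rw [← hqc1 hj hi, ← hqc1 hj' hi', he]
    have e2 : i = i' := by rw [← hqc2 hj hi, ← hqc2 hj' hi', he]
    rw [e1, e2]
  have hrow : ∀ {i j j'}, i ≤ k → j < j' → j' ≤ k → LT1 (q j i) (q j' i) := by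
    intro i j j' hi hjj hj'
    have hj : j ≤ k := le_trans (le_of_lt hjj) hj'
    have hneq : q j i ≠ q j' i := hne hj hi hj' hi (by simp; omega)
    rcases comparable (Ne.symm hneq) with hlt | hlt | hlt | hlt
    · exact hlt
    · exfalso
      have := c1_lt hDfin (hqP hj' hi) (hqP hj hi) hlt
      rw [hqc1 hj hi, hqc1 hj' hi] at this
      omega
    · exfalso
      have := c2_lt hDfin (hqP hj hi) (hqP hj' hi) hlt
      rw [hqc2 hj hi, hqc2 hj' hi] at this
      omega
    · exfalso
      have := c2_lt hDfin (hqP hj' hi) (hqP hj hi) hlt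
      rw [hqc2 hj hi, hqc2 hj' hi] at this
      omega
  have hcol : ∀ {j i i'}, j ≤ k → i < i' → i' ≤ k → LT2 (q j i) (q j i') := by
    intro j i i' hj hii hi'
    have hi : i ≤ k := le_trans (le_of_lt hii) hi'
    have hneq : q j i ≠ q j i' := hne hj hi hj hi' (by simp; omega)
    rcases comparable (Ne.symm hneq) with hlt | hlt | hlt | hlt
    · exfalso
      have := c1_lt hDfin (hqP hj hi) (hqP hj hi') hlt
      rw [hqc1 hj hi, hqc1 hj hi'] at this
      omega
    · exfalso
      have := c1_lt hDfin (hqP hj hi') (hqP hj hi) hlt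
      rw [hqc1 hj hi, hqc1 hj hi'] at this
      omega
    · exact hlt
    · exfalso
      have := c2_lt hDfin (hqP hj hi') (hqP hj hi) hlt
      rw [hqc2 hj hi, hqc2 hj hi'] at this
      omega
  -- the common order embedding
  have hDcard : hDfin.toFinset.card = k := by
    rw [← Set.ncard_eq_toFinset_card _ hDfin, hDk]
  set E : Fin k → ℝ := ⇑(hDfin.toFinset.orderEmbOfFin hDcard) with hE
  have hUrow : ∀ {i}, i ≤ k → ∀ m : Fin k, U (q ((m : ℕ) + 1) i) - U (q 0 i) = E m := by
    intro i hi
    have hmono : StrictMono (fun m : Fin k => U (q ((m : ℕ) + 1) i) - U (q 0 i)) := by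
      intro m m' hmm
      have := (hrow hi (show (m : ℕ) + 1 < (m' : ℕ) + 1 by exact_mod_cast Nat.succ_lt_succ hmm)
        (Nat.succ_le_of_lt m'.isLt)).u_lt
      simpa using this
    have hmem : ∀ m : Fin k, U (q ((m : ℕ) + 1) i) - U (q 0 i) ∈ hDfin.toFinset := by
      intro m
      rw [Set.Finite.mem_toFinset]
      have hlt := hrow hi (Nat.succ_pos m) (Nat.succ_le_of_lt m.isLt)
      exact ⟨q ((m : ℕ) + 1) i, hqP (Nat.succ_le_of_lt m.isLt) hi, q 0 i, hqP (Nat.zero_le _) hi,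
        Ne.symm hlt.1, hlt.dist⟩
    exact fun m => congrFun (Finset.orderEmbOfFin_unique hDcard hmem hmono) m
  have hVcol : ∀ {j}, j ≤ k → ∀ m : Fin k, V (q j ((m : ℕ) + 1)) - V (q j 0) = E m := by
    intro j hj
    have hmono : StrictMono (fun m : Fin k => V (q j ((m : ℕ) + 1)) - V (q j 0)) := by
      intro m m' hmm
      have := (hcol hj (show (m : ℕ) + 1 < (m' : ℕ) + 1 by exact_mod_cast Nat.succ_lt_succ hmm)
        (Nat.succ_le_of_lt m'.isLt)).v_lt
      simpa using this
    have hmem : ∀ m : Fin k, V (q j ((m : ℕ) + 1)) - V (q j 0) ∈ hDfin.toFinset := by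
      intro m
      rw [Set.Finite.mem_toFinset]
      have hlt := hcol hj (Nat.succ_pos m) (Nat.succ_le_of_lt m.isLt)
      exact ⟨q j ((m : ℕ) + 1), hqP hj (Nat.succ_le_of_lt m.isLt), q j 0, hqP hj (Nat.zero_le _),
        Ne.symm hlt.1, hlt.dist⟩
    exact fun m => congrFun (Finset.orderEmbOfFin_unique hDcard hmem hmono) m
  -- the distance sequence
  set d : ℕ → ℝ := fun j => if hj : 1 ≤ j ∧ j ≤ k then E ⟨j - 1, by omega⟩ else 0 with hd
  have hd0 : d 0 = 0 := by simp [hd]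
  have hdval : ∀ {j} (h1 : 1 ≤ j) (h2 : j ≤ k), d j = E ⟨j - 1, by omega⟩ := by
    intro j h1 h2
    simp [hd, h1, h2]
  have hUd : ∀ {i j}, i ≤ k → j ≤ k → U (q j i) = U (q 0 i) + d j := by
    intro i j hi hj
    rcases Nat.eq_zero_or_pos j with rfl | hj1
    · rw [hd0]; ring
    · rw [hdval hj1 hj]
      have h2 := hUrow hi ⟨j - 1, by omega⟩
      rw [show ((⟨j - 1, by omega⟩ : Fin k) : ℕ) + 1 = j from by show j - 1 + 1 = j; omega] at h2
      linarith [h2]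
  have hVd : ∀ {j i}, j ≤ k → i ≤ k → V (q j i) = V (q j 0) + d i := by
    intro j i hj hi
    rcases Nat.eq_zero_or_pos i with rfl | hi1
    · rw [hd0]; ring
    · rw [hdval hi1 hi]
      have h2 := hVcol hj ⟨i - 1, by omega⟩
      rw [show ((⟨i - 1, by omega⟩ : Fin k) : ℕ) + 1 = i from by show i - 1 + 1 = i; omega] at h2
      linarith [h2]
  have hd1pos : 0 < d 1 := by
    have h1 := hUd (Nat.zero_le k) hk
    have h2 := (hrow (Nat.zero_le k) Nat.zero_lt_one hk).u_lt
    linarith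
  have hdmono : ∀ {j j'}, j < j' → j' ≤ k → d j < d j' := by
    intro j j' hjj hj'
    have h1 := hUd (Nat.zero_le k) (le_trans (le_of_lt hjj) hj')
    have h2 := hUd (Nat.zero_le k) hj'
    have h3 := (hrow (Nat.zero_le k) hjj hj').u_lt
    linarith
  have hDsurj : ∀ w ∈ distSet P, ∃ m, 1 ≤ m ∧ m ≤ k ∧ d m = w := by
    intro w hw
    have hw' : w ∈ (hDfin.toFinset : Set ℝ) := Finset.mem_coe.2 (hDfin.mem_toFinset.2 hw)
    rw [← Finset.range_orderEmbOfFin _ hDcard] at hw'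
    obtain ⟨m, hm⟩ := hw'
    refine ⟨(m : ℕ) + 1, by omega, by omega, ?_⟩
    rw [hdval (by omega) (by omega)]
    rw [show (⟨(m : ℕ) + 1 - 1, by omega⟩ : Fin k) = m from by ext; simp]
    exact hm
  have hgap : ∀ {j j'}, j < j' → j' ≤ k → ∃ m, 1 ≤ m ∧ m ≤ k ∧ d j' - d j = d m := by
    intro j j' hjj hj'
    have hj : j ≤ k := le_trans (le_of_lt hjj) hj'
    have hlt := hrow (Nat.zero_le k) hjj hj'
    have hmem : d j' - d j ∈ distSet P := by
      have h1 := hUd (Nat.zero_le k) hj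
      have h2 := hUd (Nat.zero_le k) hj'
      refine ⟨q j' 0, hqP hj' (Nat.zero_le k), q j 0, hqP hj (Nat.zero_le k),
        Ne.symm hlt.1, ?_⟩
      rw [hlt.dist]
      linarith
    obtain ⟨m, hm1, hm2, hm3⟩ := hDsurj _ hmem
    exact ⟨m, hm1, hm2, hm3.symm⟩
  have hdle : ∀ {m m'}, m ≤ m' → m' ≤ k → d m ≤ d m' := by
    intro m m' hmm hm'
    rcases eq_or_lt_of_le hmm with rfl | hlt
    · exact le_rfl
    · exact le_of_lt (hdmono hlt hm')
  have hd_arith : ∀ j, j ≤ k → d j = j * d 1 := by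
    intro j
    induction j with
    | zero => intro _; rw [hd0]; simp
    | succ n ih =>
      intro hn
      rcases Nat.eq_zero_or_pos n with rfl | hn1
      · simp
      · have ihn := ih (by omega)
        obtain ⟨m1, hm11, hm12, hm13⟩ := hgap (Nat.lt_succ_self n) hn
        obtain ⟨m, hm1, hm2, hm3⟩ := hgap (show 1 < n + 1 by omega) hn
        have hge : d n ≤ d m := by
          have : d 1 ≤ d m1 := hdle hm11 hm12
          linarith
        have hlt2 : d m < d (n + 1) := by linarith
        have hmn : m = n := by
          by_contra hc
          rcases Nat.lt_or_ge m n with hlt' | hge'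
          · exact absurd (hdmono hlt' (by omega)) (by linarith)
          · have : n + 1 ≤ m := by omega
            rcases eq_or_lt_of_le this with rfl | hlt''
            · linarith
            · exact absurd (hdmono hlt'' hm2) (by linarith)
        rw [hmn] at hm3
        rw [ihn] at hm3
        push_cast
        linarith
  -- the grid coordinates
  set δ : ℝ := d 1 with hδdef
  set a : ℕ → ℝ := fun i => U (q 0 i) with ha_def
  set b : ℕ → ℝ := fun j => V (q j 0) with hb_def
  have ha : ∀ i, i < k → |a (i + 1) - a i| ≤ δ := by
    intro i hi
    have hlt := hcol (Nat.zero_le k) (Nat.lt_succ_self i) hi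
    have h1 := hlt.abs_u_le
    have h2 := hVd (Nat.zero_le k) (le_of_lt hi)
    have h3 := hVd (Nat.zero_le k) hi
    have h4 := hd_arith i (le_of_lt hi)
    have h5 := hd_arith (i + 1) hi
    have : V (q 0 (i + 1)) - V (q 0 i) = δ := by
      rw [h3, h2, h5, h4]; push_cast; ring
    rw [this] at h1
    exact h1
  have hbst : ∀ j, j < k → |b (j + 1) - b j| ≤ δ := by
    intro j hj
    have hlt := hrow (Nat.zero_le k) (Nat.lt_succ_self j) hj
    have h1 := hlt.abs_v_le
    have h3 := hUd (Nat.zero_le k) (le_of_lt hj)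
    have h4 := hUd (Nat.zero_le k) hj
    have h5 := hd_arith j (le_of_lt hj)
    have h6 := hd_arith (j + 1) hj
    have : U (q (j + 1) 0) - U (q j 0) = δ := by
      rw [h4, h3, h6, h5]; push_cast; ring
    rw [this] at h1
    exact h1
  have hpair : ∀ j i j' i', j ≤ k → i ≤ k → j' ≤ k → i' ≤ k → (j, i) ≠ (j', i') →
      ∃ m : ℕ, 1 ≤ m ∧ m ≤ k ∧
        max |a i' - a i + ((j' : ℝ) - j) * δ| |b j' - b j + ((i' : ℝ) - i) * δ| = m * δ := by
    intro j i j' i' hj hi hj' hi' hnep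
    have hne' : q j' i' ≠ q j i := Ne.symm (hne hj hi hj' hi' hnep)
    have hmem : l1 (q j' i' - q j i) ∈ distSet P :=
      ⟨q j' i', hqP hj' hi', q j i, hqP hj hi, hne', rfl⟩
    obtain ⟨m, hm1, hm2, hm3⟩ := hDsurj _ hmem
    refine ⟨m, hm1, hm2, ?_⟩
    have hUU : U (q j' i') - U (q j i) = a i' - a i + ((j' : ℝ) - j) * δ := by
      rw [hUd hi' hj', hUd hi hj, hd_arith j' hj', hd_arith j hj]
      show U (q 0 i') + (j' : ℝ) * δ - (U (q 0 i) + (j : ℝ) * δ) = _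
      ring
    have hVV : V (q j' i') - V (q j i) = b j' - b j + ((i' : ℝ) - i) * δ := by
      rw [hVd hj' hi', hVd hj hi, hd_arith i' hi', hd_arith i hi]
      show V (q j' 0) + (i' : ℝ) * δ - (V (q j 0) + (i : ℝ) * δ) = _
      ring
    rw [← hUU, ← hVV, ← l1_eq, ← hm3]
    exact hd_arith m hm2
  obtain ⟨hA, hB⟩ := core hk hd1pos ha hbst hpair
  refine ⟨δ, a 0, b 0, hd1pos, ?_⟩
  ext p
  simp only [Set.mem_setOf_eq]
  constructor
  · intro hp
    have hj : c1 P p ≤ k := by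
      have := c1_le hDfin hp
      rwa [hDk] at this
    have hi : c2 P p ≤ k := by
      have := c2_le hDfin hp
      rwa [hDk] at this
    have hpq : p = q (c1 P p) (c2 P p) := by
      apply c_injOn hDfin hp (hqP hj hi)
      · rw [hqc1 hj hi]
      · rw [hqc2 hj hi]
    refine ⟨c1 P p, c2 P p, hj, hi, ?_, ?_⟩
    · rw [hpq, hUd hi hj, hd_arith _ hj]
      show a (c2 P p) + _ = _
      rw [hA _ hi, hqc1 hj hi]
    · rw [hpq, hVd hj hi, hd_arith _ hi]
      show b (c1 P p) + _ = _
      rw [hB _ hj, hqc2 hj hi]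
  · rintro ⟨j, i, hj, hi, hU, hV⟩
    have hU' : U (q j i) = a 0 + (j : ℝ) * δ := by
      rw [hUd hi hj, hd_arith _ hj]
      show a i + _ = _
      rw [hA _ hi]
    have hV' : V (q j i) = b 0 + (i : ℝ) * δ := by
      rw [hVd hj hi, hd_arith _ hi]
      show b j + _ = _
      rw [hB _ hj]
    have : p = q j i := eq_of_UV (by rw [hU, hU']) (by rw [hV, hV'])
    rw [this]
    exact hqP hj hi

lemma lambda_char (k : ℕ) :
    Lambda 2 k = {x : Pt | ∃ j i : ℕ, j ≤ k ∧ i ≤ k ∧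
      U x = 2 * (j : ℝ) - k ∧ V x = 2 * (i : ℝ) - k} := by
  ext x
  simp only [Lambda, Set.mem_setOf_eq]
  constructor
  · rintro ⟨n, rfl, habs, hpar⟩
    rw [Fin.sum_univ_two] at habs hpar
    set s : ℤ := n 0 + n 1 with hs
    set t : ℤ := n 0 - n 1 with htd
    have h1 : |n 0| + |n 1| ≤ (k : ℤ) := habs
    have hsabs : |s| ≤ (k : ℤ) := le_trans (abs_add_le _ _) h1
    have htabs : |t| ≤ (k : ℤ) := le_trans (abs_sub _ _) h1
    rw [abs_le] at hsabs htabs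
    have hspar : s % 2 = (k : ℤ) % 2 := hpar
    have htpar : t % 2 = (k : ℤ) % 2 := by omega
    refine ⟨((s + k) / 2).toNat, ((t + k) / 2).toNat, ?_, ?_, ?_, ?_⟩
    · omega
    · omega
    · have h2 : (2 : ℤ) * ((s + k) / 2).toNat - k = s := by omega
      show (n 0 : ℝ) + n 1 = _
      have h3 : ((2 * ((s + k) / 2).toNat - (k : ℤ) : ℤ) : ℝ) = ((s : ℤ) : ℝ) := by rw [h2]
      rw [hs] at h3
      push_cast at h3
      linarith
    · have h2 : (2 : ℤ) * ((t + k) / 2).toNat - k = t := by omega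
      show (n 0 : ℝ) - n 1 = _
      have h3 : ((2 * ((t + k) / 2).toNat - (k : ℤ) : ℤ) : ℝ) = ((t : ℤ) : ℝ) := by rw [h2]
      rw [htd] at h3
      push_cast at h3
      linarith
  · rintro ⟨j, i, hj, hi, hU, hV⟩
    refine ⟨![(j : ℤ) + i - k, (j : ℤ) - i], ?_, ?_, ?_⟩
    · apply pt_ext
      · show x 0 = ((j : ℤ) + i - k : ℤ)
        simp only [U, V] at hU hV
        push_cast
        linarith
      · show x 1 = ((j : ℤ) - i : ℤ)
        simp only [U, V] at hU hV
        push_cast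
        linarith
    · rw [Fin.sum_univ_two]
      show |(j : ℤ) + i - k| + |(j : ℤ) - i| ≤ (k : ℤ)
      have hj' : (j : ℤ) ≤ k := by exact_mod_cast hj
      have hi' : (i : ℤ) ≤ k := by exact_mod_cast hi
      have h0j : (0 : ℤ) ≤ j := Int.ofNat_nonneg j
      have h0i : (0 : ℤ) ≤ i := Int.ofNat_nonneg i
      rcases abs_cases ((j : ℤ) + i - k) with ⟨e1, e2⟩ | ⟨e1, e2⟩ <;>
        rcases abs_cases ((j : ℤ) - i) with ⟨f1, f2⟩ | ⟨f1, f2⟩ <;> omega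
    · rw [Fin.sum_univ_two]
      show ((j : ℤ) + i - k + ((j : ℤ) - i)) % 2 = (k : ℤ) % 2
      omega

/-- the grid as an image of a finset -/
noncomputable def gl (k : ℕ) : ℕ × ℕ → Pt :=
  fun ji => ![(ji.1 : ℝ) + ji.2 - k, (ji.1 : ℝ) - ji.2]

lemma gl_U (k : ℕ) (ji : ℕ × ℕ) : U (gl k ji) = 2 * (ji.1 : ℝ) - k := by
  simp [gl, U]; ring
lemma gl_V (k : ℕ) (ji : ℕ × ℕ) : V (gl k ji) = 2 * (ji.2 : ℝ) - k := by
  simp [gl, V]; ring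

lemma lambda_image (k : ℕ) :
    Lambda 2 k = gl k '' ↑(Finset.Iic k ×ˢ Finset.Iic k) := by
  rw [lambda_char]
  ext x
  simp only [Set.mem_setOf_eq, Set.mem_image, Finset.coe_product, Set.mem_prod,
    Finset.mem_coe, Finset.mem_Iic]
  constructor
  · rintro ⟨j, i, hj, hi, hU, hV⟩
    refine ⟨(j, i), ⟨hj, hi⟩, ?_⟩
    apply eq_of_UV
    · rw [gl_U, hU]
    · rw [gl_V, hV]
  · rintro ⟨⟨j, i⟩, ⟨hj, hi⟩, rfl⟩
    exact ⟨j, i, hj, hi, gl_U k (j, i), gl_V k (j, i)⟩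

lemma gl_inj (k : ℕ) : Function.Injective (gl k) := by
  rintro ⟨j, i⟩ ⟨j', i'⟩ he
  have hU : U (gl k (j, i)) = U (gl k (j', i')) := by rw [he]
  have hV : V (gl k (j, i)) = V (gl k (j', i')) := by rw [he]
  rw [gl_U, gl_U] at hU
  rw [gl_V, gl_V] at hV
  have : (j : ℝ) = j' := by linarith
  have hj : j = j' := by exact_mod_cast this
  have : (i : ℝ) = i' := by linarith
  have hi : i = i' := by exact_mod_cast this
  simp [hj, hi]

lemma lambda_encard (k : ℕ) : (Lambda 2 k).encard = (((k + 1) ^ 2 : ℕ) : ℕ∞) := by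
  rw [lambda_image, Set.InjOn.encard_image (Function.Injective.injOn (gl_inj k)),
    Set.encard_coe_eq_coe_finsetCard]
  simp [Finset.card_product, Nat.card_Iic, pow_two]

end TD

open TD

/-- If P ⊆ ℝ² determines at most k distinct ℓ1-distances, then |P| = (k + 1)²
if and only if P is ℓ1-similar to Λ_2(k). -/
theorem two_dim_equality_iff (k : ℕ) (P : Set (Fin 2 → ℝ))
    (h : DeterminesAtMost k P) :
    P.encard = (((k + 1) ^ 2 : ℕ) : ℕ∞) ↔ L1Similar P (Lambda 2 k) := by
  constructor
  · intro hcard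
    obtain ⟨δ, a0, b0, hδ, hP⟩ := grid_structure h hcard
    refine ⟨2 / δ, fun _ => 1, 1, ![-(a0 + b0) / δ - k, (b0 - a0) / δ], by positivity,
      fun _ => Or.inl rfl, ?_⟩
    set f : Pt → Pt := fun x i => 2 / δ * (1 * x ((1 : Equiv.Perm (Fin 2)) i)) +
      ![-(a0 + b0) / δ - k, (b0 - a0) / δ] i with hf
    have hfU : ∀ x : Pt, U (f x) = 2 / δ * U x + (-(a0 + b0) / δ - k) + (b0 - a0) / δ := by
      intro x
      show 2 / δ * (1 * x ((1 : Equiv.Perm (Fin 2)) 0)) + _ + (2 / δ * (1 * x ((1 : Equiv.Perm (Fin 2)) 1)) + _) = _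
      simp only [Equiv.Perm.one_apply, one_mul, Matrix.cons_val_zero, Matrix.cons_val_one,
        Matrix.head_cons]
      unfold U
      ring
    have hfV : ∀ x : Pt, V (f x) = 2 / δ * V x + (-(a0 + b0) / δ - k) - (b0 - a0) / δ := by
      intro x
      show 2 / δ * (1 * x ((1 : Equiv.Perm (Fin 2)) 0)) + _ - (2 / δ * (1 * x ((1 : Equiv.Perm (Fin 2)) 1)) + _) = _
      simp only [Equiv.Perm.one_apply, one_mul, Matrix.cons_val_zero, Matrix.cons_val_one,
        Matrix.head_cons]
      unfold V
      ring
    rw [lambda_char]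
    ext y
    simp only [Set.mem_image, Set.mem_setOf_eq]
    constructor
    · rintro ⟨p, hp, rfl⟩
      rw [hP] at hp
      obtain ⟨j, i, hj, hi, hU, hV⟩ := hp
      refine ⟨j, i, hj, hi, ?_, ?_⟩
      · rw [hfU, hU]; field_simp; ring
      · rw [hfV, hV]; field_simp; ring
    · rintro ⟨j, i, hj, hi, hU, hV⟩
      refine ⟨![ (a0 + b0) / 2 + ((j : ℝ) + i) * δ / 2, (a0 - b0) / 2 + ((j : ℝ) - i) * δ / 2], ?_, ?_⟩
      · rw [hP]
        refine ⟨j, i, hj, hi, ?_, ?_⟩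
        · show (a0 + b0) / 2 + ((j : ℝ) + i) * δ / 2 + ((a0 - b0) / 2 + ((j : ℝ) - i) * δ / 2) = _
          ring
        · show (a0 + b0) / 2 + ((j : ℝ) + i) * δ / 2 - ((a0 - b0) / 2 + ((j : ℝ) - i) * δ / 2) = _
          ring
      · apply eq_of_UV
        · rw [hfU, hU]
          show 2 / δ * ((a0 + b0) / 2 + ((j : ℝ) + i) * δ / 2 + ((a0 - b0) / 2 + ((j : ℝ) - i) * δ / 2)) + _ + _ = _
          field_simp
          ring
        · rw [hfV, hV]
          show 2 / δ * ((a0 + b0) / 2 + ((j : ℝ) + i) * δ / 2 - ((a0 - b0) / 2 + ((j : ℝ) - i) * δ / 2)) + _ - _ = _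
          field_simp
          ring
  · rintro ⟨r, ε, σ, t, hr, hε, him⟩
    have hinj : Function.Injective (fun (x : Pt) i => r * (ε i * x (σ i)) + t i) := by
      intro x y he
      funext m
      have he' : ∀ i, r * (ε i * x (σ i)) + t i = r * (ε i * y (σ i)) + t i :=
        fun i => congrFun he i
      have h2 := he' (σ.symm m)
      rw [Equiv.apply_symm_apply] at h2
      have hε' : ε (σ.symm m) ≠ 0 := by
        rcases hε (σ.symm m) with h | h <;> rw [h] <;> norm_num
      have hr' : r ≠ 0 := ne_of_gt hr
      have h3 : r * (ε (σ.symm m) * x m) = r * (ε (σ.symm m) * y m) := by linarith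
      have h4 : ε (σ.symm m) * x m = ε (σ.symm m) * y m := mul_left_cancel₀ hr' h3
      exact mul_left_cancel₀ hε' h4
    calc P.encard = ((fun (x : Pt) i => r * (ε i * x (σ i)) + t i) '' P).encard :=
          (Set.InjOn.encard_image (Function.Injective.injOn hinj)).symm
      _ = (Lambda 2 k).encard := by rw [him]
      _ = _ := lambda_encard k
end

section
/- If P ⊆ ℝ² is a finite set with at least two points and D is the largest ℓ1-distance determined by P, then there exists c ∈ ℝ² such that P is contained in the closed ℓ1-ball of radius D/2 centered at c (a closed ℓ1-ball of diameter D). -/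
lemma l1_two (x : Fin 2 → ℝ) : l1 x = |x 0| + |x 1| := by
  simp [l1, Fin.sum_univ_two]

/-- If P ⊆ ℝ² is finite with at least two points and D is its largest
ℓ1-distance, then P is contained in a closed ℓ1-ball of diameter D. -/
theorem contained_in_ball_of_diameter (P : Set (Fin 2 → ℝ)) (hfin : P.Finite)
    (h2 : 2 ≤ P.ncard) (D : ℝ) (hD : IsGreatest (distSet P) D) :
    ∃ c : Fin 2 → ℝ, ∀ x ∈ P, l1 (x - c) ≤ D / 2 := by
  -- D ≥ 0
  obtain ⟨p₀, hp₀, q₀, hq₀, hne₀, hval₀⟩ := hD.1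
  have hD0 : 0 ≤ D := by
    rw [← hval₀, l1_two]
    positivity
  -- key bound: rotated coordinates vary by at most D
  have key : ∀ p ∈ P, ∀ q ∈ P,
      |(p 0 + p 1) - (q 0 + q 1)| ≤ D ∧ |(p 0 - p 1) - (q 0 - q 1)| ≤ D := by
    intro p hp q hq
    by_cases hpq : p = q
    · subst hpq; simp [hD0]
    · have hmem : l1 (p - q) ∈ distSet P := ⟨p, hp, q, hq, hpq, rfl⟩
      have hle : l1 (p - q) ≤ D := hD.2 hmem
      rw [l1_two] at hle
      simp only [Pi.sub_apply] at hle
      constructor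
      · have : |(p 0 - q 0) + (p 1 - q 1)| ≤ |p 0 - q 0| + |p 1 - q 1| := abs_add_le _ _
        have h2' : (p 0 + p 1) - (q 0 + q 1) = (p 0 - q 0) + (p 1 - q 1) := by ring
        rw [h2']; linarith
      · have : |(p 0 - q 0) - (p 1 - q 1)| ≤ |p 0 - q 0| + |p 1 - q 1| := abs_sub _ _
        have h2' : (p 0 - p 1) - (q 0 - q 1) = (p 0 - q 0) - (p 1 - q 1) := by ring
        rw [h2']; linarith
  -- Finset of P
  classical
  set s := hfin.toFinset with hs
  have hsne : s.Nonempty := ⟨p₀, hfin.mem_toFinset.mpr hp₀⟩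
  set su := s.image (fun x => x 0 + x 1) with hsu
  set sv := s.image (fun x => x 0 - x 1) with hsv
  have hsune : su.Nonempty := hsne.image _
  have hsvne : sv.Nonempty := hsne.image _
  set uMax := su.max' hsune
  set uMin := su.min' hsune
  set vMax := sv.max' hsvne
  set vMin := sv.min' hsvne
  have huD : uMax - uMin ≤ D := by
    obtain ⟨a, ha, hae⟩ := Finset.mem_image.mp (su.max'_mem hsune)
    obtain ⟨b, hb, hbe⟩ := Finset.mem_image.mp (su.min'_mem hsune)
    have := (key a (hfin.mem_toFinset.mp ha) b (hfin.mem_toFinset.mp hb)).1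
    rw [hae, hbe] at this
    have := abs_le.mp this
    linarith [this.2]
  have hvD : vMax - vMin ≤ D := by
    obtain ⟨a, ha, hae⟩ := Finset.mem_image.mp (sv.max'_mem hsvne)
    obtain ⟨b, hb, hbe⟩ := Finset.mem_image.mp (sv.min'_mem hsvne)
    have := (key a (hfin.mem_toFinset.mp ha) b (hfin.mem_toFinset.mp hb)).2
    rw [hae, hbe] at this
    have := abs_le.mp this
    linarith [this.2]
  set cu := (uMax + uMin) / 2
  set cv := (vMax + vMin) / 2
  refine ⟨![(cu + cv) / 2, (cu - cv) / 2], ?_⟩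
  intro x hx
  have hxs : x ∈ s := hfin.mem_toFinset.mpr hx
  have hxu₁ : x 0 + x 1 ≤ uMax := su.le_max' _ (Finset.mem_image_of_mem _ hxs)
  have hxu₂ : uMin ≤ x 0 + x 1 := su.min'_le _ (Finset.mem_image_of_mem _ hxs)
  have hxv₁ : x 0 - x 1 ≤ vMax := sv.le_max' _ (Finset.mem_image_of_mem _ hxs)
  have hxv₂ : vMin ≤ x 0 - x 1 := sv.min'_le _ (Finset.mem_image_of_mem _ hxs)
  have hu : |(x 0 + x 1) - cu| ≤ D / 2 := by
    rw [abs_le]; constructor <;> [skip; skip] <;> simp only [cu] <;> nlinarith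
  have hv : |(x 0 - x 1) - cv| ≤ D / 2 := by
    rw [abs_le]; constructor <;> [skip; skip] <;> simp only [cv] <;> nlinarith
  rw [l1_two]
  simp only [Pi.sub_apply, Matrix.cons_val_zero, Matrix.cons_val_one, Matrix.head_cons]
  set sdiff := (x 0 + x 1) - cu with hsd
  set tdiff := (x 0 - x 1) - cv with htd
  have h0 : x 0 - (cu + cv) / 2 = (sdiff + tdiff) / 2 := by simp [hsd, htd]; ring
  have h1 : x 1 - (cu - cv) / 2 = (sdiff - tdiff) / 2 := by simp [hsd, htd]; ring
  rw [h0, h1]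
  rcases abs_cases sdiff with ⟨hs1, hs2⟩ | ⟨hs1, hs2⟩ <;>
  rcases abs_cases tdiff with ⟨ht1, ht2⟩ | ⟨ht1, ht2⟩ <;>
  rcases abs_cases ((sdiff + tdiff) / 2) with ⟨ha1, ha2⟩ | ⟨ha1, ha2⟩ <;>
  rcases abs_cases ((sdiff - tdiff) / 2) with ⟨hb1, hb2⟩ | ⟨hb1, hb2⟩ <;>
  rw [ha1, hb1] <;> linarith [abs_le.mp hu, abs_le.mp hv, hu, hv]
end

section
/- Let D > 0, let c ∈ ℝ², let B = {x ∈ ℝ² : ‖x − c‖₁ ≤ D/2} be the closed ℓ1-ball of diameter D centered at c, and let U = {x ∈ ℝ² : ‖x − c‖₁ = D/2 and x₂ ≥ c₂} be the closed upper ℓ1-semicircle of its boundary (a union of two adjacent sides of the boundary square). Then for all x, y ∈ B \ U, ‖x − y‖₁ < D; in particular, if P ⊆ B, then removing the points of P lying in U eliminates the ℓ1-distance D from P. -/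
/-- Removing the closed upper ℓ1-semicircle U of a closed ℓ1-ball B of
diameter D eliminates the distance D: any two points of B \ U are at
ℓ1-distance strictly less than D. -/
theorem remove_upper_semicircle (D : ℝ) (hD : 0 < D) (c : Fin 2 → ℝ)
    (B : Set (Fin 2 → ℝ)) (hB : B = {x | l1 (x - c) ≤ D / 2})
    (U : Set (Fin 2 → ℝ)) (hU : U = {x | l1 (x - c) = D / 2 ∧ c 1 ≤ x 1}) :
    ∀ x ∈ B \ U, ∀ y ∈ B \ U, l1 (x - y) < D := by
  subst hB hU
  rintro x ⟨hx1, hx2⟩ y ⟨hy1, hy2⟩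
  simp only [Set.mem_setOf_eq, l1, Fin.sum_univ_two, Pi.sub_apply, not_and, not_le] at *
  have t0 := abs_sub_le (x 0) (c 0) (y 0)
  have t1 := abs_sub_le (x 1) (c 1) (y 1)
  by_cases hxe : |x 0 - c 0| + |x 1 - c 1| = D / 2
  · by_cases hye : |y 0 - c 0| + |y 1 - c 1| = D / 2
    · have hxb := hx2 hxe
      have hyb := hy2 hye
      rcases abs_cases (x 0 - c 0) with ⟨e1, _⟩ | ⟨e1, _⟩ <;>
      rcases abs_cases (y 0 - c 0) with ⟨e2, _⟩ | ⟨e2, _⟩ <;>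
      rcases abs_cases (x 0 - y 0) with ⟨e3, _⟩ | ⟨e3, _⟩ <;>
      rcases abs_cases (x 1 - y 1) with ⟨e4, _⟩ | ⟨e4, _⟩ <;>
      rcases abs_cases (x 1 - c 1) with ⟨e5, _⟩ | ⟨e5, _⟩ <;>
      rcases abs_cases (y 1 - c 1) with ⟨e6, _⟩ | ⟨e6, _⟩ <;>
      linarith
    · have hy1' : |y 0 - c 0| + |y 1 - c 1| < D / 2 := lt_of_le_of_ne hy1 hye
      have := abs_sub_comm (c 0) (y 0)
      have := abs_sub_comm (c 1) (y 1)
      linarith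
  · have hx1' : |x 0 - c 0| + |x 1 - c 1| < D / 2 := lt_of_le_of_ne hx1 hxe
    have := abs_sub_comm (c 0) (y 0)
    have := abs_sub_comm (c 1) (y 1)
    linarith
end

section
/- Let V = (x₁, y₁, z₁) and W = (x₂, y₂, z₂) be points of ℝ³. If ‖V‖₁ = ‖W‖₁ and x₁x₂ ≥ 0, y₁y₂ ≥ 0, z₁z₂ ≥ 0, then ‖V − W‖₁ = 2·max{|x₁ − x₂|, |y₁ − y₂|, |z₁ − z₂|}. -/
lemma abs_sub_eq_abs_abs (x y : ℝ) (h : 0 ≤ x * y) : |x - y| = |(|x| - |y|)| := by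
  rcases mul_nonneg_iff.mp h with ⟨hx, hy⟩ | ⟨hx, hy⟩
  · rw [abs_of_nonneg hx, abs_of_nonneg hy]
  · rw [abs_of_nonpos hx, abs_of_nonpos hy,
      show -x - -y = -(x - y) by ring, abs_neg]

lemma sum_zero_abs (a b c : ℝ) (h : a + b + c = 0) :
    |a| + |b| + |c| = 2 * max |a| (max |b| |c|) := by
  rcases abs_cases a with ⟨ha, ha'⟩ | ⟨ha, ha'⟩ <;>
  rcases abs_cases b with ⟨hb, hb'⟩ | ⟨hb, hb'⟩ <;>
  rcases abs_cases c with ⟨hc, hc'⟩ | ⟨hc, hc'⟩ <;>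
  rw [ha, hb, hc, max_def, max_def] <;>
  split_ifs <;> linarith

/-- If V = (x₁,y₁,z₁), W = (x₂,y₂,z₂) have equal ℓ1-norms and componentwise
matching signs, then ‖V − W‖₁ = 2·max{|x₁−x₂|, |y₁−y₂|, |z₁−z₂|}. -/
theorem same_face_distance (x₁ y₁ z₁ x₂ y₂ z₂ : ℝ)
    (h : |x₁| + |y₁| + |z₁| = |x₂| + |y₂| + |z₂|)
    (hx : 0 ≤ x₁ * x₂) (hy : 0 ≤ y₁ * y₂) (hz : 0 ≤ z₁ * z₂) :
    |x₁ - x₂| + |y₁ - y₂| + |z₁ - z₂| =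
      2 * max |x₁ - x₂| (max |y₁ - y₂| |z₁ - z₂|) := by
  rw [abs_sub_eq_abs_abs _ _ hx, abs_sub_eq_abs_abs _ _ hy,
      abs_sub_eq_abs_abs _ _ hz]
  exact sum_zero_abs (|x₁| - |x₂|) (|y₁| - |y₂|) (|z₁| - |z₂|) (by linarith)
end

section
/- If d, k ∈ ℕ and P ⊆ ℝ^d determines at most k distinct ℓ∞-distances, then |P| ≤ (k + 1)^d; moreover, |P| = (k + 1)^d holds if and only if P is ℓ1-similar to the grid {0, 1, 2, …, k}^d. -/
/-- The set of nonzero ℓ∞-distances determined by P (the norm on Fin d → ℝ is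
the sup norm). -/
def distSetInf {d : ℕ} (P : Set (Fin d → ℝ)) : Set ℝ :=
  {r | ∃ p ∈ P, ∃ q ∈ P, p ≠ q ∧ ‖p - q‖ = r}

section Aux

lemma mem_distSetInf {d : ℕ} {P : Set (Fin d → ℝ)} {p q : Fin d → ℝ}
    (hp : p ∈ P) (hq : q ∈ P) (hne : p ≠ q) : ‖p - q‖ ∈ distSetInf P :=
  ⟨p, hp, q, hq, hne, rfl⟩

lemma distSetInf_pos {d : ℕ} {P : Set (Fin d → ℝ)} {x : ℝ}
    (hx : x ∈ distSetInf P) : 0 < x := by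
  obtain ⟨p, hp, q, hq, hne, rfl⟩ := hx
  exact norm_pos_iff.mpr (sub_ne_zero.mpr hne)

lemma abs_coord_le {d : ℕ} (x : Fin d → ℝ) (i : Fin d) : |x i| ≤ ‖x‖ := by
  simpa [Real.norm_eq_abs] using norm_le_pi_norm x i

lemma exists_abs_coord_eq_norm {d : ℕ} [Nonempty (Fin d)] (x : Fin d → ℝ) :
    ∃ i, |x i| = ‖x‖ := by
  obtain ⟨i, -, hi⟩ :=
    Finset.exists_mem_eq_sup (Finset.univ) Finset.univ_nonempty (fun i => ‖x i‖₊)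
  refine ⟨i, ?_⟩
  rw [Pi.norm_def, hi]
  simp [Real.norm_eq_abs]

/-- The set of distances realized from `p` in coordinate `i`, in direction `s`. -/
noncomputable def rsetAux {d : ℕ} (P : Set (Fin d → ℝ)) (DF : Finset ℝ) (s : ℝ)
    (p : Fin d → ℝ) (i : Fin d) : Finset ℝ :=
  @Finset.filter ℝ (fun μ => ∃ q ∈ P, s * (q i - p i) = μ ∧ ‖q - p‖ = μ)
    (Classical.decPred _) DF

lemma mem_rsetAux {d : ℕ} {P : Set (Fin d → ℝ)} {DF : Finset ℝ} {s : ℝ}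
    {p : Fin d → ℝ} {i : Fin d} {x : ℝ} :
    x ∈ rsetAux P DF s p i ↔ x ∈ DF ∧ ∃ q ∈ P, s * (q i - p i) = x ∧ ‖q - p‖ = x := by
  unfold rsetAux
  exact @Finset.mem_filter _ _ (Classical.decPred _) _ _

lemma rsetAux_subset {d : ℕ} (P : Set (Fin d → ℝ)) (DF : Finset ℝ) (s : ℝ)
    (p : Fin d → ℝ) (i : Fin d) : rsetAux P DF s p i ⊆ DF :=
  fun _ hx => (mem_rsetAux.mp hx).1

lemma rset_mono {d : ℕ} {P : Set (Fin d → ℝ)} {DF : Finset ℝ}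
    (hDF : ∀ x, x ∈ DF ↔ x ∈ distSetInf P) {s : ℝ} (hs : s = 1 ∨ s = -1)
    {p q : Fin d → ℝ} (hp : p ∈ P) (hq : q ∈ P) (hne : p ≠ q) {i : Fin d}
    (hr : s * (q i - p i) = ‖q - p‖) :
    (rsetAux P DF s q i).card < (rsetAux P DF s p i).card := by
  classical
  set μ := ‖q - p‖ with hμ
  have hμD : μ ∈ DF := (hDF μ).mpr (mem_distSetInf hq hp (Ne.symm hne))
  have hμpos : 0 < μ := distSetInf_pos ((hDF μ).mp hμD)
  have hsabs : ∀ y : ℝ, |s * y| = |y| := by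
    rcases hs with h | h <;> simp [h, abs_mul]
  have hsub : insert μ ((rsetAux P DF s q i).image (fun x => x + μ))
      ⊆ rsetAux P DF s p i := by
    intro x hx
    rcases Finset.mem_insert.mp hx with rfl | hx
    · exact mem_rsetAux.mpr ⟨hμD, q, hq, hr, rfl⟩
    · obtain ⟨μ', hμ', rfl⟩ := Finset.mem_image.mp hx
      obtain ⟨hμ'D, w, hw, hw1, hw2⟩ := mem_rsetAux.mp hμ'
      have hμ'pos : 0 < μ' := distSetInf_pos ((hDF μ').mp hμ'D)
      have hcoord : s * (w i - p i) = μ' + μ := by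
        have h9 : w i - p i = (w i - q i) + (q i - p i) := by ring
        rw [h9, mul_add, hw1, hr]
      have hle : ‖w - p‖ ≤ μ' + μ := by
        calc ‖w - p‖ = ‖(w - q) + (q - p)‖ := by rw [sub_add_sub_cancel]
          _ ≤ ‖w - q‖ + ‖q - p‖ := norm_add_le _ _
          _ = μ' + μ := by rw [hw2]
      have hge : μ' + μ ≤ ‖w - p‖ := by
        have h1 : μ' + μ ≤ |w i - p i| := by
          rw [← hsabs (w i - p i), hcoord]
          exact le_abs_self _
        have h2 : |w i - p i| ≤ ‖w - p‖ := by
          simpa using abs_coord_le (w - p) i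
        linarith
      have hnorm : ‖w - p‖ = μ' + μ := le_antisymm hle hge
      have hwp : w ≠ p := by
        intro h
        rw [h] at hcoord
        simp at hcoord
        linarith
      refine mem_rsetAux.mpr ⟨?_, w, hw, hcoord, hnorm⟩
      rw [hDF]
      rw [← hnorm]
      exact mem_distSetInf hw hp hwp
  have hnotmem : μ ∉ (rsetAux P DF s q i).image (fun x => x + μ) := by
    intro h
    obtain ⟨μ', hμ', he⟩ := Finset.mem_image.mp h
    have h0 : 0 < μ' := distSetInf_pos ((hDF μ').mp ((mem_rsetAux.mp hμ').1))
    simp at he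
    linarith
  calc (rsetAux P DF s q i).card
      = ((rsetAux P DF s q i).image (fun x => x + μ)).card :=
        (Finset.card_image_of_injective _ (add_left_injective μ)).symm
    _ < (insert μ ((rsetAux P DF s q i).image (fun x => x + μ))).card := by
        rw [Finset.card_insert_of_notMem hnotmem]; omega
    _ ≤ _ := Finset.card_le_card hsub

lemma rvec_inj {d : ℕ} {P : Set (Fin d → ℝ)} {DF : Finset ℝ}
    (hDF : ∀ x, x ∈ DF ↔ x ∈ distSetInf P) {s : ℝ} (hs : s = 1 ∨ s = -1)
    {p q : Fin d → ℝ} (hp : p ∈ P) (hq : q ∈ P)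
    (h : ∀ i, (rsetAux P DF s p i).card = (rsetAux P DF s q i).card) : p = q := by
  by_contra hne
  rcases isEmpty_or_nonempty (Fin d) with hE | hNE
  · exact hne (funext fun i => isEmptyElim i)
  obtain ⟨i, hi⟩ := exists_abs_coord_eq_norm (q - p)
  have hqp : (q - p) i = q i - p i := rfl
  have hpos : (0 : ℝ) < ‖q - p‖ := norm_pos_iff.mpr (sub_ne_zero.mpr (Ne.symm hne))
  rcases le_or_gt 0 ((q - p) i) with hsign | hsign
  · -- q i - p i = ‖q - p‖
    have h9 : ‖q - p‖ = (q - p) i := by rw [← hi, abs_of_nonneg hsign]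
    have hco : q i - p i = ‖q - p‖ := by rw [h9, hqp]
    rcases hs with rfl | rfl
    · have hlt := rset_mono hDF (Or.inl rfl) hp hq hne (i := i) (by rw [one_mul]; exact hco)
      have heq := h i
      omega
    · have hco' : (-1 : ℝ) * (p i - q i) = ‖p - q‖ := by
        rw [norm_sub_rev]; linarith
      have hlt := rset_mono hDF (Or.inr rfl) hq hp (Ne.symm hne) (i := i) hco'
      have heq := h i
      omega
  · -- p i - q i = ‖q - p‖
    have h9 : ‖q - p‖ = -((q - p) i) := by rw [← hi, abs_of_neg hsign]
    have hco : p i - q i = ‖q - p‖ := by rw [h9, hqp]; ring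
    rcases hs with rfl | rfl
    · have hlt := rset_mono hDF (Or.inl rfl) hq hp (Ne.symm hne) (i := i)
        (by rw [one_mul, norm_sub_rev]; exact hco)
      have heq := h i
      omega
    · have hco' : (-1 : ℝ) * (q i - p i) = ‖q - p‖ := by linarith
      have hlt := rset_mono hDF (Or.inr rfl) hp hq hne (i := i) hco'
      have heq := h i
      omega

lemma encard_le_pow {d K : ℕ} {P : Set (Fin d → ℝ)} {DF : Finset ℝ}
    (hDF : ∀ x, x ∈ DF ↔ x ∈ distSetInf P) (hK : DF.card ≤ K) :
    P.encard ≤ (((K + 1) ^ d : ℕ) : ℕ∞) := by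
  classical
  set Φ : (Fin d → ℝ) → (Fin d → Fin (K + 1)) :=
    fun p i => ⟨min (rsetAux P DF 1 p i).card K, Nat.lt_succ_of_le (min_le_right _ _)⟩
    with hΦ
  have hval : ∀ p i, ((Φ p i : ℕ)) = (rsetAux P DF 1 p i).card := by
    intro p i
    simp only [hΦ]
    exact min_eq_left (le_trans (Finset.card_le_card (rsetAux_subset P DF 1 p i)) hK)
  have hinj : Set.InjOn Φ P := by
    intro p hp q hq he
    refine rvec_inj hDF (Or.inl rfl) hp hq (fun i => ?_)
    have h1 := congrFun he i
    rw [← hval p i, ← hval q i, h1]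
  calc P.encard = (Φ '' P).encard := (Set.InjOn.encard_image hinj).symm
    _ ≤ (Set.univ : Set (Fin d → Fin (K + 1))).encard :=
        Set.encard_mono (Set.subset_univ _)
    _ = (((K + 1) ^ d : ℕ) : ℕ∞) := by
        rw [Set.encard_univ, ENat.card_eq_coe_fintype_card]
        simp [Fintype.card_fun]

lemma grid_encard (d k : ℕ) :
    ({x : Fin d → ℝ | ∀ i, ∃ j : ℕ, j ≤ k ∧ x i = (j : ℝ)}).encard
      = (((k + 1) ^ d : ℕ) : ℕ∞) := by
  classical
  set g : (Fin d → Fin (k + 1)) → (Fin d → ℝ) := fun v i => ((v i : ℕ) : ℝ) with hg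
  have hinj : Function.Injective g := by
    intro v w h
    funext i
    have h1 := congrFun h i
    simp only [hg] at h1
    exact Fin.ext (Nat.cast_injective h1)
  have himg : g '' Set.univ = {x : Fin d → ℝ | ∀ i, ∃ j : ℕ, j ≤ k ∧ x i = (j : ℝ)} := by
    ext x
    constructor
    · rintro ⟨v, -, rfl⟩ i
      exact ⟨v i, Nat.lt_succ_iff.mp (v i).isLt, rfl⟩
    · intro hx
      choose j hj hx using hx
      exact ⟨fun i => ⟨j i, Nat.lt_succ_iff.mpr (hj i)⟩, trivial,
        by funext i; exact (hx i).symm⟩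
  rw [← himg, Set.InjOn.encard_image (hinj.injOn), Set.encard_univ,
    ENat.card_eq_coe_fintype_card]
  simp [Fintype.card_fun]

lemma main_struct {d k : ℕ} (hd : 0 < d) (hk : 0 < k) {P : Set (Fin d → ℝ)}
    (hPf : P.Finite)
    {DF : Finset ℝ} (hDF : ∀ x, x ∈ DF ↔ x ∈ distSetInf P)
    (hDcard : DF.card = k)
    (hPcard : hPf.toFinset.card = (k + 1) ^ d) :
    L1Similar P {x : Fin d → ℝ | ∀ i, ∃ j : ℕ, j ≤ k ∧ x i = (j : ℝ)} := by
  classical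
  haveI : Nonempty (Fin d) := ⟨⟨0, hd⟩⟩
  set FP := hPf.toFinset with hFPdef
  have hmemFP : ∀ p, p ∈ FP ↔ p ∈ P := fun p => hPf.mem_toFinset
  have hFPne : FP.Nonempty := by
    rw [← Finset.card_pos, hPcard]
    positivity
  have hDne : DF.Nonempty := by
    rw [← Finset.card_pos, hDcard]; omega
  set lam := DF.min' hDne with hlamdef
  have hlampos : 0 < lam := distSetInf_pos ((hDF _).mp (DF.min'_mem hDne))
  have hcard_le : ∀ (s : ℝ) p i, (rsetAux P DF s p i).card ≤ k :=
    fun s p i => le_trans (Finset.card_le_card (rsetAux_subset P DF s p i)) hDcard.le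
  set Φ : ℝ → (Fin d → ℝ) → (Fin d → Fin (k + 1)) :=
    fun s p i => ⟨min (rsetAux P DF s p i).card k, Nat.lt_succ_of_le (min_le_right _ _)⟩
    with hΦ
  have hval : ∀ s p i, ((Φ s p i : ℕ)) = (rsetAux P DF s p i).card := by
    intro s p i
    simp only [hΦ]
    exact min_eq_left (hcard_le s p i)
  have hinjΦ : ∀ s : ℝ, (s = 1 ∨ s = -1) →
      ∀ p ∈ FP, ∀ q ∈ FP, Φ s p = Φ s q → p = q := by
    intro s hs p hp q hq he
    refine rvec_inj hDF hs ((hmemFP p).mp hp) ((hmemFP q).mp hq) (fun i => ?_)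
    have h1 := congrFun he i
    rw [← hval s p i, ← hval s q i, h1]
  have himgΦ : ∀ s : ℝ, (s = 1 ∨ s = -1) →
      FP.image (Φ s) = (Finset.univ : Finset (Fin d → Fin (k + 1))) := by
    intro s hs
    apply Finset.eq_univ_of_card
    rw [Finset.card_image_of_injOn (fun p hp q hq => hinjΦ s hs p hp q hq), hPcard]
    simp [Fintype.card_fun]
  have hsurj : ∀ s : ℝ, (s = 1 ∨ s = -1) → ∀ v : Fin d → Fin (k + 1),
      ∃ p ∈ FP, ∀ i, (rsetAux P DF s p i).card = (v i : ℕ) := by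
    intro s hs v
    have hv : v ∈ FP.image (Φ s) := by rw [himgΦ s hs]; exact Finset.mem_univ v
    obtain ⟨p, hp, hpv⟩ := Finset.mem_image.mp hv
    refine ⟨p, hp, fun i => ?_⟩
    rw [← hval s p i, hpv]
  have hsum : ∀ s : ℝ, (s = 1 ∨ s = -1) → ∀ i,
      ∑ p ∈ FP, (rsetAux P DF s p i).card
        = ∑ v : Fin d → Fin (k + 1), (v i : ℕ) := by
    intro s hs i
    have h1 : ∑ v ∈ FP.image (Φ s), ((v i : ℕ)) = ∑ p ∈ FP, ((Φ s p i : ℕ)) :=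
      Finset.sum_image (fun p hp q hq => hinjΦ s hs p hp q hq)
    rw [himgΦ s hs] at h1
    rw [h1]
    exact Finset.sum_congr rfl (fun p _ => (hval s p i).symm)
  have hrev : ∀ i : Fin d,
      (∑ v : Fin d → Fin (k + 1), (v i : ℕ)) * 2 = k * (k + 1) ^ d := by
    intro i
    have h1 : ∑ v : Fin d → Fin (k + 1), (v i : ℕ)
        = ∑ v : Fin d → Fin (k + 1), (k - (v i : ℕ)) := by
      refine Fintype.sum_equiv (Equiv.piCongrRight (fun _ => Fin.revPerm)) _ _ ?_
      intro v
      have h2 : ((Equiv.piCongrRight (fun _ : Fin d => Fin.revPerm)) v) i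
          = Fin.rev (v i) := rfl
      rw [h2]
      have h3 : (Fin.rev (v i) : ℕ) = k + 1 - ((v i : ℕ) + 1) := Fin.val_rev (v i)
      have h4 := (v i).isLt
      omega
    have h2 : (∑ v : Fin d → Fin (k + 1), (v i : ℕ)) * 2
        = ∑ v : Fin d → Fin (k + 1), ((v i : ℕ) + (k - (v i : ℕ))) := by
      rw [Finset.sum_add_distrib, ← h1]; ring
    rw [h2]
    have h3 : ∀ v : Fin d → Fin (k + 1), ((v i : ℕ) + (k - (v i : ℕ))) = k :=
      fun v => Nat.add_sub_cancel' (Nat.lt_succ_iff.mp (v i).isLt)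
    have h5 : ∑ v : Fin d → Fin (k + 1), ((v i : ℕ) + (k - (v i : ℕ)))
        = ∑ _v : Fin d → Fin (k + 1), k := Finset.sum_congr rfl (fun v _ => h3 v)
    rw [h5, Finset.sum_const, smul_eq_mul, Finset.card_univ]
    simp [Fintype.card_fun]
    ring
  -- geometric sumset fact
  have hgeom : ∀ (p : Fin d → ℝ) (i : Fin d),
      ∀ a ∈ rsetAux P DF 1 p i, ∀ b ∈ rsetAux P DF (-1) p i,
        a + b ∈ DF.erase lam := by
    intro p i a ha b hb
    obtain ⟨haD, qa, hqa, hqa1, hqa2⟩ := mem_rsetAux.mp ha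
    obtain ⟨hbD, qb, hqb, hqb1, hqb2⟩ := mem_rsetAux.mp hb
    have ha' : qa i - p i = a := by linarith [hqa1]
    have hb' : p i - qb i = b := by linarith [hqb1]
    have hapos : 0 < a := distSetInf_pos ((hDF a).mp haD)
    have hbpos : 0 < b := distSetInf_pos ((hDF b).mp hbD)
    have hcoord : qa i - qb i = a + b := by linarith
    have hle' : ‖qa - qb‖ ≤ a + b := by
      calc ‖qa - qb‖ = ‖(qa - p) - (qb - p)‖ := by rw [sub_sub_sub_cancel_right]
        _ ≤ ‖qa - p‖ + ‖qb - p‖ := norm_sub_le _ _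
        _ = a + b := by rw [hqa2, hqb2]
    have hge' : a + b ≤ ‖qa - qb‖ := by
      have h1 : a + b ≤ |qa i - qb i| := by rw [hcoord]; exact le_abs_self _
      have h2 : |qa i - qb i| ≤ ‖qa - qb‖ := by
        simpa using abs_coord_le (qa - qb) i
      linarith
    have hnorm : ‖qa - qb‖ = a + b := le_antisymm hle' hge'
    have hne : qa ≠ qb := by
      intro h; rw [h] at hcoord; simp at hcoord; linarith
    have hmem : a + b ∈ DF := by
      rw [hDF, ← hnorm]; exact mem_distSetInf hqa hqb hne
    refine Finset.mem_erase.mpr ⟨?_, hmem⟩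
    have h1 : lam ≤ a := DF.min'_le a haD
    have h2 : lam ≤ b := DF.min'_le b hbD
    intro h
    linarith
  -- pointwise bound r + l ≤ k
  have hle : ∀ p ∈ FP, ∀ i : Fin d,
      (rsetAux P DF 1 p i).card + (rsetAux P DF (-1) p i).card ≤ k := by
    intro p hp i
    set R := rsetAux P DF 1 p i with hR
    set L := rsetAux P DF (-1) p i with hL
    rcases R.eq_empty_or_nonempty with he | hRne
    · rw [he]; simpa using hcard_le (-1) p i
    rcases L.eq_empty_or_nonempty with he | hLne
    · rw [he]; simpa using hcard_le 1 p i
    set a1 := R.max' hRne with ha1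
    set b0 := L.min' hLne with hb0
    have hU : (R.image (fun x => x + b0)) ∪ (L.image (fun x => a1 + x))
        ⊆ DF.erase lam := by
      intro x hx
      rcases Finset.mem_union.mp hx with hx | hx
      · obtain ⟨a, ha, rfl⟩ := Finset.mem_image.mp hx
        exact hgeom p i a ha b0 (L.min'_mem hLne)
      · obtain ⟨b, hb, rfl⟩ := Finset.mem_image.mp hx
        exact hgeom p i a1 (R.max'_mem hRne) b hb
    have hI : ((R.image (fun x => x + b0)) ∩ (L.image (fun x => a1 + x))).card ≤ 1 := by
      apply Finset.card_le_one.mpr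
      intro x hx y hy
      have hval' : ∀ z, z ∈ (R.image (fun x => x + b0)) ∩ (L.image (fun x => a1 + x))
          → z = a1 + b0 := by
        intro z hz
        obtain ⟨hz1, hz2⟩ := Finset.mem_inter.mp hz
        obtain ⟨a, ha, rfl⟩ := Finset.mem_image.mp hz1
        obtain ⟨b, hb, he2⟩ := Finset.mem_image.mp hz2
        have h1 : a ≤ a1 := R.le_max' a ha
        have h2 : b0 ≤ b := L.min'_le b hb
        linarith
      rw [hval' x hx, hval' y hy]
    have hcard1 : (R.image (fun x => x + b0)).card = R.card :=
      Finset.card_image_of_injective _ (add_left_injective b0)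
    have hcard2 : (L.image (fun x => a1 + x)).card = L.card :=
      Finset.card_image_of_injective _ (add_right_injective a1)
    have hUcard : ((R.image (fun x => x + b0)) ∪ (L.image (fun x => a1 + x))).card
        ≤ k - 1 := by
      refine le_trans (Finset.card_le_card hU) ?_
      rw [Finset.card_erase_of_mem (DF.min'_mem hDne), hDcard]
    have := Finset.card_union_add_card_inter
      (R.image (fun x => x + b0)) (L.image (fun x => a1 + x))
    rw [hcard1, hcard2] at this
    omega
  -- equality r + l = k
  have hkey : ∀ p ∈ FP, ∀ i : Fin d,
      (rsetAux P DF 1 p i).card + (rsetAux P DF (-1) p i).card = k := by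
    have hsumRL : ∀ i : Fin d, ∑ p ∈ FP,
        ((rsetAux P DF 1 p i).card + (rsetAux P DF (-1) p i).card)
          = k * (k + 1) ^ d := by
      intro i
      rw [Finset.sum_add_distrib, hsum 1 (Or.inl rfl) i, hsum (-1) (Or.inr rfl) i,
        ← hrev i]
      ring
    intro p hp i
    by_contra hne
    have hlt' : (rsetAux P DF 1 p i).card + (rsetAux P DF (-1) p i).card < k :=
      lt_of_le_of_ne (hle p hp i) hne
    have hstrict : ∑ q ∈ FP,
        ((rsetAux P DF 1 q i).card + (rsetAux P DF (-1) q i).card)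
          < ∑ _q ∈ FP, k :=
      Finset.sum_lt_sum (fun q hq => hle q hq i) ⟨p, hp, hlt'⟩
    rw [hsumRL i, Finset.sum_const, smul_eq_mul, hPcard] at hstrict
    have hmc := Nat.mul_comm k ((k + 1) ^ d)
    omega
  -- Step A : structure of D
  obtain ⟨p₀, hp₀, hp₀v⟩ := hsurj 1 (Or.inl rfl) (fun _ => ⟨k - 1, by omega⟩)
  set i₀ : Fin d := Classical.arbitrary (Fin d) with hi₀
  have hRcard : (rsetAux P DF 1 p₀ i₀).card = k - 1 := hp₀v i₀
  have hLcard : (rsetAux P DF (-1) p₀ i₀).card = 1 := by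
    have := hkey p₀ hp₀ i₀
    omega
  obtain ⟨ν, hν⟩ := Finset.card_eq_one.mp hLcard
  have hνL : ν ∈ rsetAux P DF (-1) p₀ i₀ := by rw [hν]; exact Finset.mem_singleton_self ν
  have hνD : ν ∈ DF := rsetAux_subset P DF (-1) p₀ i₀ hνL
  have hνpos : 0 < ν := distSetInf_pos ((hDF ν).mp hνD)
  set Lam := DF.max' hDne with hLam
  have himg1 : (rsetAux P DF 1 p₀ i₀).image (fun x => x + ν) = DF.erase lam := by
    apply Finset.eq_of_subset_of_card_le
    · intro x hx
      obtain ⟨a, ha, rfl⟩ := Finset.mem_image.mp hx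
      exact hgeom p₀ i₀ a ha ν hνL
    · rw [Finset.card_erase_of_mem (DF.min'_mem hDne), hDcard,
        Finset.card_image_of_injective _ (add_left_injective ν), hRcard]
  have hRsub : rsetAux P DF 1 p₀ i₀ = DF.erase Lam := by
    apply Finset.eq_of_subset_of_card_le
    · intro a ha
      refine Finset.mem_erase.mpr ⟨?_, rsetAux_subset P DF 1 p₀ i₀ ha⟩
      have h1 : a + ν ∈ DF.erase lam := hgeom p₀ i₀ a ha ν hνL
      have h2 : a + ν ≤ Lam := DF.le_max' _ (Finset.mem_of_mem_erase h1)
      intro h; rw [h] at h2; linarith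
    · rw [Finset.card_erase_of_mem (DF.max'_mem hDne), hDcard, hRcard]
  have hstep : ∀ x ∈ DF, x ≠ lam → ∃ a ∈ DF, a ≠ Lam ∧ a + ν = x := by
    intro x hx hxl
    have h1 : x ∈ (rsetAux P DF 1 p₀ i₀).image (fun x => x + ν) := by
      rw [himg1]; exact Finset.mem_erase.mpr ⟨hxl, hx⟩
    obtain ⟨a, ha, he⟩ := Finset.mem_image.mp h1
    rw [hRsub] at ha
    exact ⟨a, Finset.mem_of_mem_erase ha, (Finset.mem_erase.mp ha).1, he⟩
  have hind : ∀ n : ℕ, ∀ x ∈ DF,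
      (DF.filter (fun y => y ≤ x)).card ≤ n → ∃ j : ℕ, x = lam + (j : ℝ) * ν := by
    intro n
    induction n with
    | zero =>
      intro x hx hc
      exfalso
      have h1 : x ∈ DF.filter (fun y => y ≤ x) := Finset.mem_filter.mpr ⟨hx, le_refl x⟩
      have := Finset.card_pos.mpr ⟨x, h1⟩
      omega
    | succ n ih =>
      intro x hx hc
      by_cases hxl : x = lam
      · exact ⟨0, by rw [hxl]; push_cast; ring⟩
      · obtain ⟨a, haD, haΛ, hax⟩ := hstep x hx hxl
        have halt : a < x := by linarith
        have hxmem : x ∈ DF.filter (fun y => y ≤ x) :=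
          Finset.mem_filter.mpr ⟨hx, le_refl x⟩
        have hsub2 : DF.filter (fun y => y ≤ a)
            ⊆ (DF.filter (fun y => y ≤ x)).erase x := by
          intro y hy
          obtain ⟨hy1, hy2⟩ := Finset.mem_filter.mp hy
          exact Finset.mem_erase.mpr ⟨by intro h; rw [h] at hy2; linarith,
            Finset.mem_filter.mpr ⟨hy1, le_trans hy2 halt.le⟩⟩
        have hcard' : (DF.filter (fun y => y ≤ a)).card ≤ n := by
          have h1 := Finset.card_le_card hsub2
          rw [Finset.card_erase_of_mem hxmem] at h1
          omega
        obtain ⟨j, hj⟩ := ih a haD hcard'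
        exact ⟨j + 1, by rw [← hax, hj]; push_cast; ring⟩
  have hmult : ∀ x ∈ DF, ∃ j : ℕ, x = lam + (j : ℝ) * ν :=
    fun x hx => hind (DF.filter (fun y => y ≤ x)).card x hx le_rfl
  have hνlam : ν = lam := by
    obtain ⟨j, hj⟩ := hmult ν hνD
    rcases Nat.eq_zero_or_pos j with rfl | hj1
    · simpa using hj
    · exfalso
      have h1 : (1 : ℝ) ≤ (j : ℝ) := by exact_mod_cast hj1
      nlinarith
  have hmult' : ∀ x ∈ DF, ∃ m : ℕ, 1 ≤ m ∧ x = (m : ℝ) * lam := by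
    intro x hx
    obtain ⟨j, hj⟩ := hmult x hx
    exact ⟨j + 1, by omega, by rw [hj, hνlam]; push_cast; ring⟩
  choose! mf hmf1 hmf2 using hmult'
  have hmfinj : ∀ x ∈ DF, ∀ y ∈ DF, mf x = mf y → x = y := by
    intro x hx y hy h
    rw [hmf2 x hx, hmf2 y hy, h]
  have hstep2 : ∀ x ∈ DF, x ≠ Lam → x + lam ∈ DF := by
    intro x hx hxΛ
    have h1 : x ∈ rsetAux P DF 1 p₀ i₀ := by
      rw [hRsub]; exact Finset.mem_erase.mpr ⟨hxΛ, hx⟩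
    have h2 : x + ν ∈ DF.erase lam := by
      rw [← himg1]; exact Finset.mem_image.mpr ⟨x, h1, rfl⟩
    rw [hνlam] at h2
    exact Finset.mem_of_mem_erase h2
  have hup : ∀ m : ℕ, 1 ≤ m → m ≤ k → (m : ℝ) * lam ∈ DF := by
    intro m
    induction m with
    | zero => omega
    | succ m ih =>
      intro h1 h2
      rcases Nat.eq_zero_or_pos m with rfl | hm
      · simpa using DF.min'_mem hDne
      · have hmem := ih hm (by omega)
        have hne2 : (m : ℝ) * lam ≠ Lam := by
          intro hΛ
          have hsub3 : DF.image mf ⊆ Finset.Icc 1 m := by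
            intro j hj
            obtain ⟨x, hx, rfl⟩ := Finset.mem_image.mp hj
            refine Finset.mem_Icc.mpr ⟨hmf1 x hx, ?_⟩
            have hxΛ : x ≤ Lam := DF.le_max' x hx
            rw [hmf2 x hx, ← hΛ] at hxΛ
            have := (mul_le_mul_iff_of_pos_right hlampos).mp hxΛ
            exact_mod_cast this
          have h3 : (DF.image mf).card = k := by
            rw [Finset.card_image_of_injOn (fun x hx y hy => hmfinj x hx y hy), hDcard]
          have h4 := Finset.card_le_card hsub3
          rw [h3, Nat.card_Icc] at h4
          omega
        have h5 := hstep2 _ hmem hne2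
        have h6 : ((m : ℝ) + 1) * lam = (m : ℝ) * lam + lam := by ring
        push_cast
        rw [h6]
        exact h5
  have hDeq : DF = (Finset.Icc 1 k).image (fun m : ℕ => (m : ℝ) * lam) := by
    symm
    apply Finset.eq_of_subset_of_card_le
    · intro x hx
      obtain ⟨m, hm, rfl⟩ := Finset.mem_image.mp hx
      obtain ⟨hm1, hm2⟩ := Finset.mem_Icc.mp hm
      exact hup m hm1 hm2
    · rw [hDcard, Finset.card_image_of_injOn, Nat.card_Icc]
      · omega
      · intro x hx y hy hxy
        have : (x : ℝ) = y := by
          have := mul_right_cancel₀ (ne_of_gt hlampos) hxy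
          exact this
        exact_mod_cast this
  -- bounds on maxima of subsets of DF
  have hSL : ∀ A : Finset ℝ, A ⊆ DF → ∀ hA : A.Nonempty,
      (A.card : ℝ) * lam ≤ A.max' hA := by
    intro A hAD hA
    have hsub4 : A.image mf ⊆ Finset.Icc 1 (mf (A.max' hA)) := by
      intro j hj
      obtain ⟨x, hx, rfl⟩ := Finset.mem_image.mp hj
      refine Finset.mem_Icc.mpr ⟨hmf1 x (hAD hx), ?_⟩
      have h1 : x ≤ A.max' hA := A.le_max' x hx
      rw [hmf2 x (hAD hx), hmf2 (A.max' hA) (hAD (A.max'_mem hA))] at h1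
      have := (mul_le_mul_iff_of_pos_right hlampos).mp h1
      exact_mod_cast this
    have h2 : A.card ≤ mf (A.max' hA) := by
      have h3 : (A.image mf).card = A.card :=
        Finset.card_image_of_injOn (fun x hx y hy => hmfinj x (hAD hx) y (hAD hy))
      have h4 := Finset.card_le_card hsub4
      rw [h3, Nat.card_Icc] at h4
      omega
    rw [hmf2 (A.max' hA) (hAD (A.max'_mem hA))]
    have : (A.card : ℝ) ≤ (mf (A.max' hA) : ℝ) := by exact_mod_cast h2
    nlinarith
  set mlo : Fin d → ℝ := fun i => FP.inf' hFPne (fun p => p i) with hmlo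
  set mhi : Fin d → ℝ := fun i => FP.sup' hFPne (fun p => p i) with hmhi
  have hspread : ∀ i, mhi i - mlo i ≤ (k : ℝ) * lam := by
    intro i
    obtain ⟨pM, hpM, hMe⟩ := Finset.exists_mem_eq_sup' hFPne (fun p => p i)
    obtain ⟨pm, hpm, hme⟩ := Finset.exists_mem_eq_inf' hFPne (fun p => p i)
    have h2 : mhi i - mlo i = pM i - pm i := by
      simp only [hmhi, hmlo]
      rw [hMe, hme]
    by_cases he : pM = pm
    · rw [h2, he, sub_self]
      positivity
    · have h1 : ‖pM - pm‖ ∈ DF :=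
        (hDF _).mpr (mem_distSetInf ((hmemFP pM).mp hpM) ((hmemFP pm).mp hpm) he)
      rw [hDeq] at h1
      obtain ⟨mm, hmm, hmx⟩ := Finset.mem_image.mp h1
      obtain ⟨hmm1, hmm2⟩ := Finset.mem_Icc.mp hmm
      have h3 : pM i - pm i ≤ |pM i - pm i| := le_abs_self _
      have h4 : |pM i - pm i| ≤ ‖pM - pm‖ := by simpa using abs_coord_le (pM - pm) i
      have h5 : ‖pM - pm‖ ≤ (k : ℝ) * lam := by
        rw [← hmx]
        have : (mm : ℝ) ≤ (k : ℝ) := by exact_mod_cast hmm2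
        nlinarith
      linarith
  have hb1 : ∀ p ∈ FP, ∀ i : Fin d,
      ((rsetAux P DF 1 p i).card : ℝ) * lam ≤ mhi i - p i := by
    intro p hp i
    rcases (rsetAux P DF 1 p i).eq_empty_or_nonempty with he | hne2
    · rw [he]
      simp only [Finset.card_empty, Nat.cast_zero, zero_mul]
      have : p i ≤ mhi i := Finset.le_sup' (fun p => p i) hp
      linarith
    · have h1 := hSL _ (rsetAux_subset P DF 1 p i) hne2
      obtain ⟨haD, q, hq, hq1, hq2⟩ :=
        mem_rsetAux.mp ((rsetAux P DF 1 p i).max'_mem hne2)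
      have h2 : q i ≤ mhi i := Finset.le_sup' (fun p => p i) ((hmemFP q).mpr hq)
      have h3 : q i - p i = (rsetAux P DF 1 p i).max' hne2 := by linarith [hq1]
      linarith
  have hb2 : ∀ p ∈ FP, ∀ i : Fin d,
      ((rsetAux P DF (-1) p i).card : ℝ) * lam ≤ p i - mlo i := by
    intro p hp i
    rcases (rsetAux P DF (-1) p i).eq_empty_or_nonempty with he | hne2
    · rw [he]
      simp only [Finset.card_empty, Nat.cast_zero, zero_mul]
      have : mlo i ≤ p i := Finset.inf'_le (fun p => p i) hp
      linarith
    · have h1 := hSL _ (rsetAux_subset P DF (-1) p i) hne2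
      obtain ⟨haD, q, hq, hq1, hq2⟩ :=
        mem_rsetAux.mp ((rsetAux P DF (-1) p i).max'_mem hne2)
      have h2 : mlo i ≤ q i := Finset.inf'_le (fun p => p i) ((hmemFP q).mpr hq)
      have h3 : p i - q i = (rsetAux P DF (-1) p i).max' hne2 := by linarith [hq1]
      linarith
  have hcoordeq : ∀ p ∈ FP, ∀ i : Fin d,
      p i = mlo i + lam * ((rsetAux P DF (-1) p i).card : ℝ) := by
    intro p hp i
    have h1 := hb1 p hp i
    have h2 := hb2 p hp i
    have h3 := hspread i
    have h4 : ((rsetAux P DF 1 p i).card : ℝ) + ((rsetAux P DF (-1) p i).card : ℝ)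
        = (k : ℝ) := by exact_mod_cast hkey p hp i
    nlinarith
  -- assemble the similarity
  refine ⟨1 / lam, fun _ => 1, Equiv.refl _, fun i => -(mlo i) / lam,
    by positivity, fun i => Or.inl rfl, ?_⟩
  ext y
  simp only [Set.mem_image, Set.mem_setOf_eq, Equiv.refl_apply, one_mul]
  constructor
  · rintro ⟨x, hx, rfl⟩ i
    refine ⟨(rsetAux P DF (-1) x i).card, hcard_le (-1) x i, ?_⟩
    show 1 / lam * x i + -mlo i / lam = ((rsetAux P DF (-1) x i).card : ℝ)
    rw [hcoordeq x ((hmemFP x).mpr hx) i]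
    field_simp
    ring
  · intro hy
    choose j hj hyj using hy
    obtain ⟨p, hp, hpv⟩ := hsurj (-1) (Or.inr rfl)
      (fun i => ⟨j i, by have := hj i; omega⟩)
    refine ⟨p, (hmemFP p).mp hp, ?_⟩
    funext i
    have hpc := hcoordeq p hp i
    have hji : (rsetAux P DF (-1) p i).card = j i := hpv i
    rw [hyj i, ← hji, hpc]
    field_simp
    ring
end Aux

/-- If P ⊆ ℝ^d determines at most k distinct ℓ∞-distances, then |P| ≤ (k+1)^d,
with equality iff P is ℓ1-similar to the grid {0, 1, …, k}^d. -/
theorem linfty_bound (d k : ℕ) (P : Set (Fin d → ℝ))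
    (h : (distSetInf P).encard ≤ (k : ℕ∞)) :
    P.encard ≤ (((k + 1) ^ d : ℕ) : ℕ∞) ∧
    (P.encard = (((k + 1) ^ d : ℕ) : ℕ∞) ↔
      L1Similar P {x : Fin d → ℝ | ∀ i, ∃ j : ℕ, j ≤ k ∧ x i = (j : ℝ)}) := by
  classical
  have hDfin : (distSetInf P).Finite := by
    rw [← Set.encard_lt_top_iff]
    exact lt_of_le_of_lt h (WithTop.coe_lt_top k)
  set DF := hDfin.toFinset with hDFdef
  have hDF : ∀ x, x ∈ DF ↔ x ∈ distSetInf P := fun x => hDfin.mem_toFinset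
  have hDcard_le : DF.card ≤ k := by
    have h1 : (distSetInf P).encard = (DF.card : ℕ∞) :=
      hDfin.encard_eq_coe_toFinset_card
    rw [h1] at h
    exact_mod_cast h
  have hbound : P.encard ≤ (((k + 1) ^ d : ℕ) : ℕ∞) := encard_le_pow hDF hDcard_le
  refine ⟨hbound, ?_, ?_⟩
  · intro h2
    rcases Nat.eq_zero_or_pos d with rfl | hd
    · -- d = 0
      have h1 : P.encard = 1 := by simpa using h2
      obtain ⟨a, rfl⟩ := Set.encard_eq_one.mp h1
      refine ⟨1, fun _ => 1, Equiv.refl _, fun _ => 0, one_pos,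
        fun i => Or.inl rfl, ?_⟩
      ext y
      simp only [Set.mem_image, Set.mem_setOf_eq]
      constructor
      · intro _ i
        exact i.elim0
      · intro _
        exact ⟨a, rfl, funext fun i => i.elim0⟩
    rcases Nat.eq_zero_or_pos k with rfl | hk
    · -- k = 0
      have h1 : P.encard = 1 := by simpa using h2
      obtain ⟨a, rfl⟩ := Set.encard_eq_one.mp h1
      refine ⟨1, fun _ => 1, Equiv.refl _, fun i => -(a i), one_pos,
        fun i => Or.inl rfl, ?_⟩
      ext y
      simp only [Set.mem_image, Set.mem_singleton_iff, Set.mem_setOf_eq]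
      constructor
      · rintro ⟨x, rfl, rfl⟩ i
        exact ⟨0, le_refl 0, by simp⟩
      · intro hy
        refine ⟨a, rfl, funext fun i => ?_⟩
        obtain ⟨j, hj, hyj⟩ := hy i
        interval_cases j
        simp [hyj]
    · -- main case
      have hPfin : P.Finite := Set.finite_of_encard_eq_coe h2
      have hPcard : hPfin.toFinset.card = (k + 1) ^ d := by
        have h3 := hPfin.encard_eq_coe_toFinset_card
        rw [h2] at h3
        exact_mod_cast h3.symm
      have hDcard : DF.card = k := by
        by_contra hne
        have hlt : DF.card < k := lt_of_le_of_ne hDcard_le hne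
        have hb2 := encard_le_pow hDF (le_refl DF.card)
        rw [h2] at hb2
        have h4 : (k + 1) ^ d ≤ (DF.card + 1) ^ d := by exact_mod_cast hb2
        have h5 : (DF.card + 1) ^ d < (k + 1) ^ d :=
          Nat.pow_lt_pow_left (by omega) (by omega)
        omega
      exact main_struct hd hk hPfin hDF hDcard hPcard
  · intro hsim
    obtain ⟨r, ε, σ, t, hr, hε, himg⟩ := hsim
    have hinj : Set.InjOn (fun x (i : Fin d) => r * (ε i * x (σ i)) + t i) P := by
      intro x _ y _ he
      funext jj
      have h1 := congrFun he (σ.symm jj)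
      simp only [Equiv.apply_symm_apply] at h1
      have hε' : ε (σ.symm jj) ≠ 0 := by
        rcases hε (σ.symm jj) with h | h <;> rw [h] <;> norm_num
      have h2 : r * (ε (σ.symm jj) * x jj) = r * (ε (σ.symm jj) * y jj) := by
        have := congrFun he (σ.symm jj)
        simp only [Equiv.apply_symm_apply] at this
        linarith
      have h3 := mul_left_cancel₀ (ne_of_gt hr) h2
      exact mul_left_cancel₀ hε' h3
    calc P.encard = ((fun x (i : Fin d) => r * (ε i * x (σ i)) + t i) '' P).encard :=
        (Set.InjOn.encard_image hinj).symm
      _ = _ := by rw [himg]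
      _ = (((k + 1) ^ d : ℕ) : ℕ∞) := grid_encard d k
end
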